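/- arXiv:2509.20545 — 8 statements merged into one kernel-verified Lean document; each statement's English description precedes it below -/
import Mathlib

section
/- Let q ≥ 2 and N ≥ 1 be integers, let n ∈ S_{q,N}, let j ∈ {0,…,q−1}, and let i be any position in {1,…,N}. If n_j ≥ 1, then K_{j,i} D_n = √(C(N−1; n−u_j)/C(N;n)) · D_{n−u_j}; if n_j = 0, then K_{j,i} D_n = 0. -/
/-!
Inserting the letter `j` into a string raises its composition by `u_j` and changes nothing else.
Hence `K_{j,i} D_n` is supported on the strings of composition `n - u_j` (none if `n_j = 0`),
where it takes the constant value `C(N;n)^{-1/2} = √(C(N-1;n-u_j)/C(N;n)) · C(N-1;n-u_j)^{-1/2}`.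
-/

/-- The discrete simplex `S_{q,N}`: tuples of naturals of length `q` summing to `N`. -/
def simplex (q N : ℕ) : Finset (Fin q → ℕ) := Finset.Nat.antidiagonalTuple q N

/-- Multinomial coefficient `C(∑ n; n)` for a tuple of naturals. -/
def multinat {q : ℕ} (n : Fin q → ℕ) : ℕ := Nat.multinomial Finset.univ n

/-- Multinomial coefficient for an integer tuple: `0` if some entry is negative. -/
def multZ {q : ℕ} (n : Fin q → ℤ) : ℕ :=
  if ∀ i, 0 ≤ n i then Nat.multinomial Finset.univ (fun i => (n i).toNat) else 0

/-- The `N`-qudit space `H_{q,N}`: complex-valued functions on strings `Fin N → Fin q`. -/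
abbrev Hsp (q N : ℕ) := (Fin N → Fin q) → ℂ

/-- The inner product `⟨u,v⟩ = ∑_x conj (u x) · v x` on `H_{q,N}`. -/
noncomputable def hinner {q N : ℕ} (u v : Hsp q N) : ℂ :=
  ∑ x : Fin N → Fin q, (starRingEnd ℂ) (u x) * v x

/-- The composition of a string `x : Fin N → Fin q`: `compn x i = #{k : x k = i}`. -/
def compn {q N : ℕ} (x : Fin N → Fin q) : Fin q → ℕ :=
  fun i => (Finset.univ.filter (fun k => x k = i)).card

/-- The Dicke state `D_n = C(N;n)^{-1/2} ∑_{x : comp x = n} δ_x`. -/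
noncomputable def dicke {q N : ℕ} (n : Fin q → ℕ) : Hsp q N :=
  fun x => if compn x = n then (((Real.sqrt (multinat n))⁻¹ : ℝ) : ℂ) else 0

/-- The type-`j` deletion operator at position `i`: `(delAt j i v) y = v (y with j inserted
at position i)`; equivalently `delAt j i δ_x = [x i = j] · δ_{x∼i}`. -/
def delAt {q M : ℕ} (j : Fin q) (i : Fin (M + 1)) (v : Hsp q (M + 1)) : Hsp q M :=
  fun y => v (i.insertNth j y)

lemma Pi.add_single_one_eq_iff {ι : Type*} [DecidableEq ι] {m n : ι → ℕ} {j : ι}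
    (hj : 1 ≤ n j) : m + Pi.single j 1 = n ↔ m = Function.update n j (n j - 1) := by
  constructor
  · rintro rfl
    ext k
    rcases eq_or_ne k j with rfl | hk <;> simp [*]
  · rintro rfl
    ext k
    rcases eq_or_ne k j with rfl | hk
    · simp only [Pi.add_apply, Function.update_self, Pi.single_eq_same]
      omega
    · simp [hk]

lemma compn_insertNth {q M : ℕ} (j : Fin q) (i : Fin (M + 1)) (y : Fin M → Fin q) :
    compn (i.insertNth j y) = compn y + Pi.single j 1 := by
  ext k
  simp only [compn, Finset.card_filter, Pi.add_apply, Pi.single_apply]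
  rw [Fin.sum_univ_succAbove _ i]
  simp [add_comm, eq_comm]

lemma compn_insertNth_eq_iff {q M : ℕ} {n : Fin q → ℕ} {j : Fin q} (hj : 1 ≤ n j)
    (i : Fin (M + 1)) (y : Fin M → Fin q) :
    compn (i.insertNth j y) = n ↔ compn y = Function.update n j (n j - 1) := by
  rw [compn_insertNth, Pi.add_single_one_eq_iff hj]

lemma compn_insertNth_ne {q M : ℕ} {n : Fin q → ℕ} {j : Fin q} (hj : n j = 0)
    (i : Fin (M + 1)) (y : Fin M → Fin q) : compn (i.insertNth j y) ≠ n := by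
  intro h
  have := congrFun h j
  simp [compn_insertNth, hj] at this

lemma delAt_dicke_of_pos {q M : ℕ} {n : Fin q → ℕ} {j : Fin q} (hj : 1 ≤ n j)
    (i : Fin (M + 1)) :
    delAt j i (dicke n) =
      ((Real.sqrt (multinat (Function.update n j (n j - 1))) / Real.sqrt (multinat n) : ℝ) : ℂ) •
        dicke (Function.update n j (n j - 1)) := by
  have hpos : 0 < Real.sqrt (multinat (Function.update n j (n j - 1))) :=
    Real.sqrt_pos.mpr (Nat.cast_pos.mpr (Nat.multinomial_pos _ _))
  ext y
  simp only [delAt, dicke, compn_insertNth_eq_iff hj, Pi.smul_apply, smul_eq_mul]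
  split_ifs
  · rw [← Complex.ofReal_mul, div_mul_eq_mul_div, mul_inv_cancel₀ hpos.ne', one_div]
  · simp

lemma delAt_dicke_of_eq_zero {q M : ℕ} {n : Fin q → ℕ} {j : Fin q} (hj : n j = 0)
    (i : Fin (M + 1)) : delAt j i (dicke n) = 0 := by
  ext y
  simp [delAt, dicke, compn_insertNth_ne hj]

theorem deletion_on_dicke_general (q M : ℕ) (n : Fin q → ℕ)
    (j : Fin q) (i : Fin (M + 1)) :
    (1 ≤ n j →
      delAt j i (dicke n) =
        ((Real.sqrt ((multinat (Function.update n j (n j - 1)) : ℝ) / (multinat n : ℝ)) : ℝ) : ℂ) •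
          dicke (Function.update n j (n j - 1))) ∧
    (n j = 0 → delAt j i (dicke n) = 0) := by
  refine ⟨fun hj => ?_, fun hj => delAt_dicke_of_eq_zero hj i⟩
  rw [Real.sqrt_div (Nat.cast_nonneg _)]
  exact delAt_dicke_of_pos hj i

/-- action of a single type-`j` deletion (at any position `i`) on a Dicke
state: if `n j ≥ 1` then `K_{j,i} D_n = √(C(N−1; n−u_j)/C(N;n)) • D_{n−u_j}`, and if
`n j = 0` then `K_{j,i} D_n = 0`.  (Here `N = M + 1 ≥ 1` and `q ≥ 2`.) -/
theorem deletion_on_dicke (q M : ℕ) (hq : 2 ≤ q) (n : Fin q → ℕ)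
    (hn : ∑ i, n i = M + 1) (j : Fin q) (i : Fin (M + 1)) :
    (1 ≤ n j →
      delAt j i (dicke n) =
        ((Real.sqrt ((multinat (Function.update n j (n j - 1)) : ℝ) / (multinat n : ℝ)) : ℝ) : ℂ) •
          dicke (Function.update n j (n j - 1))) ∧
    (n j = 0 → delAt j i (dicke n) = 0) :=
  deletion_on_dicke_general q M n j i
end

section
/- Let q ≥ 2, N ≥ 0, 0 ≤ e ≤ N be integers, let n ∈ S_{q,N}, and let j ∈ {0,…,q−1}. Let (K_j)^e denote the composition of e single type-j deletion operators (applied at arbitrary positions), mapping H_{q,N} to H_{q,N−e}. If n_j ≥ e, then (K_j)^e D_n = √(C(N−e; n−e·u_j)/C(N;n)) · D_{n−e·u_j}; if n_j < e, then (K_j)^e D_n = 0. -/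
/-- Iterated deletion: given a choice of a position `pos m : Fin (m+1)` for every
dimension `m`, apply single deletions of types `w 0, w 1, …` in succession, each at the
chosen (arbitrary) position. -/
def EdelP {q : ℕ} (pos : ∀ m : ℕ, Fin (m + 1)) :
    {t : ℕ} → (Fin t → Fin q) → {M : ℕ} → Hsp q (M + t) → Hsp q M
  | 0, _, _, v => v
  | t + 1, w, M, v => EdelP pos (fun k => w k.succ) (delAt (w 0) (pos (M + t)) v)

lemma EdelP_comp_compn {q : ℕ} (pos : ∀ m : ℕ, Fin (m + 1)) :
    ∀ {t : ℕ} (w : Fin t → Fin q) {M : ℕ} (g : (Fin q → ℕ) → ℂ) (y : Fin M → Fin q),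
      EdelP pos w (g ∘ compn) y = g (compn y + ∑ k, Pi.single (w k) 1)
  | 0, _, _, _, _ => by simp [EdelP]
  | t + 1, w, M, g, y => by
    have hdel : delAt (w 0) (pos (M + t)) (g ∘ compn) =
        (fun c => g (c + Pi.single (w 0) 1)) ∘ compn := by
      funext z
      simp only [delAt, Function.comp_apply, compn_insertNth]
    rw [EdelP, hdel, EdelP_comp_compn pos (fun k => w k.succ), Fin.sum_univ_succ,
      add_assoc, add_comm (Pi.single (w 0) 1)]

lemma EdelP_const_dicke_apply {q M e : ℕ} (pos : ∀ m : ℕ, Fin (m + 1)) (j : Fin q)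
    (n : Fin q → ℕ) (y : Fin M → Fin q) :
    EdelP pos (fun _ : Fin e => j) (dicke (N := M + e) n) y =
      if compn y + Pi.single j e = n then (((√(multinat n))⁻¹ : ℝ) : ℂ) else 0 := by
  change EdelP pos _ ((fun c => if c = n then (((√(multinat n))⁻¹ : ℝ) : ℂ) else 0) ∘ compn) y = _
  simp [EdelP_comp_compn, ← Pi.single_smul]

lemma add_single_eq_iff {ι : Type*} [DecidableEq ι] {c n : ι → ℕ} {j : ι} {e : ℕ}
    (he : e ≤ n j) : c + Pi.single j e = n ↔ c = Function.update n j (n j - e) := by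
  constructor <;> rintro rfl <;> funext i <;> rcases eq_or_ne i j with rfl | hij <;> simp [*]

lemma add_single_ne {ι : Type*} [DecidableEq ι] {c n : ι → ℕ} {j : ι} {e : ℕ}
    (he : n j < e) : c + Pi.single j e ≠ n := by
  rintro rfl
  simp at he

lemma inv_sqrt_eq_sqrt_div_mul_inv_sqrt {a b : ℝ} (ha : 0 < a) :
    (√b)⁻¹ = √(a / b) * (√a)⁻¹ := by
  rw [Real.sqrt_div ha.le, div_mul_eq_mul_div, mul_inv_cancel₀ (Real.sqrt_pos.mpr ha).ne', one_div]

theorem deletion_power_on_dicke_general (q M e : ℕ) (n : Fin q → ℕ)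
    (j : Fin q) (pos : ∀ m : ℕ, Fin (m + 1)) :
    (e ≤ n j →
      EdelP pos (fun _ : Fin e => j) (dicke (N := M + e) n) =
        ((Real.sqrt ((multinat (Function.update n j (n j - e)) : ℝ) / (multinat n : ℝ)) : ℝ) : ℂ) •
          dicke (N := M) (Function.update n j (n j - e))) ∧
    (n j < e → EdelP pos (fun _ : Fin e => j) (dicke (N := M + e) n) = (0 : Hsp q M)) := by
  constructor
  · intro he
    funext y
    have hpos : (0 : ℝ) < multinat (Function.update n j (n j - e)) := by
      exact_mod_cast Nat.multinomial_pos _ _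
    rw [EdelP_const_dicke_apply, Pi.smul_apply, dicke]
    by_cases hy : compn y = Function.update n j (n j - e)
    · rw [if_pos ((add_single_eq_iff he).mpr hy), if_pos hy, smul_eq_mul, ← Complex.ofReal_mul,
        ← inv_sqrt_eq_sqrt_div_mul_inv_sqrt hpos]
    · rw [if_neg (mt (add_single_eq_iff he).mp hy), if_neg hy, smul_zero]
  · intro he
    funext y
    rw [EdelP_const_dicke_apply, if_neg (add_single_ne he)]
    rfl

/-- the `e`-th power of the type-`j` deletion operator (a composition of `e`
single type-`j` deletions, applied at arbitrary positions) acting on a Dicke state: if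
`n j ≥ e` then `(K_j)^e D_n = √(C(N−e; n−e·u_j)/C(N;n)) • D_{n−e·u_j}`, and if `n j < e`
then `(K_j)^e D_n = 0`.  (Here `N = M + e`, so `0 ≤ e ≤ N`, and `q ≥ 2`.) -/
theorem deletion_power_on_dicke (q M e : ℕ) (hq : 2 ≤ q) (n : Fin q → ℕ)
    (hn : ∑ i, n i = M + e) (j : Fin q) (pos : ∀ m : ℕ, Fin (m + 1)) :
    (e ≤ n j →
      EdelP pos (fun _ : Fin e => j) (dicke (N := M + e) n) =
        ((Real.sqrt ((multinat (Function.update n j (n j - e)) : ℝ) / (multinat n : ℝ)) : ℝ) : ℂ) •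
          dicke (N := M) (Function.update n j (n j - e))) ∧
    (n j < e → EdelP pos (fun _ : Fin e => j) (dicke (N := M + e) n) = (0 : Hsp q M)) :=
  deletion_power_on_dicke_general q M e n j pos
end

section
/- Let q ≥ 2 and N ≥ 0 be integers, let γ ∈ ℝ with 0 < γ < 1, let α, β ∈ ℂ^{S_{q,N}}, and set c = ∑_{n∈S_{q,N}} α_n δ_n and c′ = ∑_{n∈S_{q,N}} β_n δ_n in the q-mode Fock space. Let r, r′ : Fin q → ℕ with |r|₁ = s and |r′|₁ = s′ and s, s′ ≤ N. If s ≠ s′, then ⟨A_r c, A_{r′} c′⟩ = 0. If s = s′, then ⟨A_r c, A_{r′} c′⟩ = (1−γ)^{N−s} · γ^s · C(N,s) · √(C(s;r)·C(s;r′)) · ∑_{n∈S_{q,N}} conj(α_n) · β_{n−r+r′} · C(N−s; n−r)/√(C(N;n)·C(N;n−r+r′)), where summands in which n−r or n−r+r′ has a negative entry are 0. -/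
/-- The `q`-mode Fock space: complex-valued functions on occupation tuples `Fin q → ℕ`
(the vectors appearing below are finitely supported). -/
abbrev Fock (q : ℕ) := (Fin q → ℕ) → ℂ

/-- The inner product `⟨u,v⟩ = ∑_n conj (u n) · v n` on (finitely supported elements of)
Fock space, as a finite sum over the support. -/
noncomputable def finner {q : ℕ} (u v : Fock q) : ℂ :=
  ∑ᶠ n : Fin q → ℕ, (starRingEnd ℂ) (u n) * v n

/-- The Fock basis state `|n⟩`. -/
noncomputable def fockδ {q : ℕ} (n : Fin q → ℕ) : Fock q :=
  fun m => if m = n then 1 else 0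

/-- The amplitude-damping Kraus operator `A_r` with damping parameter `γ`:
`A_r |n⟩ = (∏ i, (1−γ)^{(n i − r i)/2} γ^{r i / 2} C(n i, r i)^{1/2}) |n − r⟩` when
`r ≤ n` entrywise, and `A_r |n⟩ = 0` otherwise. -/
noncomputable def ampDamp {q : ℕ} (γ : ℝ) (r : Fin q → ℕ) (u : Fock q) : Fock q :=
  fun m =>
    (((∏ i, Real.sqrt ((1 - γ) ^ (m i) * γ ^ (r i) * (Nat.choose (m i + r i) (r i) : ℝ))) : ℝ) : ℂ) *
      u (fun i => m i + r i)

/-- The coefficient `C(N−t; n−e) / √(C(N;n)·C(N; n−e+f))` appearing in the error-correction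
conditions; it vanishes when `n − e` has a negative entry. -/
noncomputable def klCoeff {q : ℕ} (n e f : Fin q → ℕ) : ℝ :=
  (multZ (fun i => (n i : ℤ) - (e i : ℤ)) : ℝ) /
    Real.sqrt ((multinat n : ℝ) * (multinat (fun i => n i - e i + f i) : ℝ))

lemma prod_sqrt {ι : Type*} (s : Finset ι) (f : ι → ℝ) (hf : ∀ i ∈ s, 0 ≤ f i) :
    ∏ i ∈ s, Real.sqrt (f i) = Real.sqrt (∏ i ∈ s, f i) := by
  induction s using Finset.cons_induction with
  | empty => simp
  | cons a s ha ih =>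
    rw [Finset.prod_cons, Finset.prod_cons, ih (fun i hi => hf i (Finset.mem_cons_of_mem hi)),
      ← Real.sqrt_mul (hf a (Finset.mem_cons_self a s))]

lemma key_nat {q : ℕ} (m r : Fin q → ℕ) :
    (∏ i, Nat.choose (m i + r i) (r i)) * Nat.multinomial Finset.univ (fun i => m i + r i)
    = Nat.choose ((∑ i, m i) + ∑ i, r i) (∑ i, r i) * Nat.multinomial Finset.univ r *
        Nat.multinomial Finset.univ m := by
  have hpos : 0 < (∏ i, (m i).factorial) * ∏ i, (r i).factorial := by positivity
  apply Nat.eq_of_mul_eq_mul_right hpos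
  have h1 : ∀ i : Fin q, Nat.choose (m i + r i) (r i) * ((m i).factorial * (r i).factorial)
      = (m i + r i).factorial := by
    intro i
    rw [← Nat.add_choose_mul_factorial_mul_factorial (m i) (r i)]
    ring
  calc (∏ i, Nat.choose (m i + r i) (r i)) * Nat.multinomial Finset.univ (fun i => m i + r i) *
        ((∏ i, (m i).factorial) * ∏ i, (r i).factorial)
      = ((∏ i, (m i + r i).factorial) * Nat.multinomial Finset.univ (fun i => m i + r i)) := by
        rw [← Finset.prod_mul_distrib, mul_right_comm, ← Finset.prod_mul_distrib,
          Finset.prod_congr rfl (fun i _ => h1 i)]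
    _ = ((∑ i, m i) + ∑ i, r i).factorial := by
        rw [Nat.multinomial_spec]
        congr 1
        rw [← Finset.sum_add_distrib]
    _ = Nat.choose ((∑ i, m i) + ∑ i, r i) (∑ i, r i) * Nat.multinomial Finset.univ r *
        Nat.multinomial Finset.univ m * ((∏ i, (m i).factorial) * ∏ i, (r i).factorial) := by
        rw [← Nat.add_choose_mul_factorial_mul_factorial (∑ i, m i) (∑ i, r i),
          ← Nat.multinomial_spec, ← Nat.multinomial_spec]
        ring

set_option maxHeartbeats 1600000 in
lemma main_real {q : ℕ} (γ : ℝ) (hγ0 : 0 < γ) (hγ1 : γ < 1) (m r r' : Fin q → ℕ)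
    (hss : ∑ i, r i = ∑ i, r' i) :
    (∏ i, Real.sqrt ((1 - γ) ^ (m i) * γ ^ (r i) * (Nat.choose (m i + r i) (r i) : ℝ))) *
      (∏ i, Real.sqrt ((1 - γ) ^ (m i) * γ ^ (r' i) * (Nat.choose (m i + r' i) (r' i) : ℝ)))
    = (1 - γ) ^ (∑ i, m i) * γ ^ (∑ i, r i) *
        (Nat.choose ((∑ i, m i) + ∑ i, r i) (∑ i, r i) : ℝ) *
        Real.sqrt ((Nat.multinomial Finset.univ r : ℝ) * (Nat.multinomial Finset.univ r' : ℝ)) *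
        ((Nat.multinomial Finset.univ m : ℝ) /
          Real.sqrt ((Nat.multinomial Finset.univ (fun i => m i + r i) : ℝ) *
            (Nat.multinomial Finset.univ (fun i => m i + r' i) : ℝ))) := by
  have hc : (0:ℝ) < 1 - γ := by linarith
  have hC1 : (∏ i, (Nat.choose (m i + r i) (r i) : ℝ)) *
      (Nat.multinomial Finset.univ (fun i => m i + r i) : ℝ)
      = (Nat.choose ((∑ i, m i) + ∑ i, r i) (∑ i, r i) : ℝ) *
        (Nat.multinomial Finset.univ r : ℝ) * (Nat.multinomial Finset.univ m : ℝ) := by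
    exact_mod_cast congrArg (Nat.cast (R := ℝ)) (key_nat m r)
  have hC2 : (∏ i, (Nat.choose (m i + r' i) (r' i) : ℝ)) *
      (Nat.multinomial Finset.univ (fun i => m i + r' i) : ℝ)
      = (Nat.choose ((∑ i, m i) + ∑ i, r i) (∑ i, r i) : ℝ) *
        (Nat.multinomial Finset.univ r' : ℝ) * (Nat.multinomial Finset.univ m : ℝ) := by
    rw [hss]
    exact_mod_cast congrArg (Nat.cast (R := ℝ)) (key_nat m r')
  set M := ∑ i, m i with hM
  set s := ∑ i, r i with hsdef
  set A : ℝ := (Nat.multinomial Finset.univ (fun i => m i + r i) : ℝ) with hA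
  set B : ℝ := (Nat.multinomial Finset.univ (fun i => m i + r' i) : ℝ) with hB
  set R : ℝ := (Nat.multinomial Finset.univ r : ℝ) with hR
  set R' : ℝ := (Nat.multinomial Finset.univ r' : ℝ) with hR'
  set Mm : ℝ := (Nat.multinomial Finset.univ m : ℝ) with hMm
  set K : ℝ := (Nat.choose (M + s) s : ℝ) with hK
  have hApos : (0:ℝ) < A := by
    rw [hA]; exact_mod_cast Nat.multinomial_pos _ _
  have hBpos : (0:ℝ) < B := by
    rw [hB]; exact_mod_cast Nat.multinomial_pos _ _
  have hRnn : (0:ℝ) ≤ R := by positivity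
  have hR'nn : (0:ℝ) ≤ R' := by positivity
  have hMmnn : (0:ℝ) ≤ Mm := by positivity
  have hKnn : (0:ℝ) ≤ K := by positivity
  rw [prod_sqrt _ _ (fun i _ => by positivity), prod_sqrt _ _ (fun i _ => by positivity),
    ← Real.sqrt_mul (by positivity)]
  have hprod1 : (∏ i, (1 - γ) ^ (m i) * γ ^ (r i) * (Nat.choose (m i + r i) (r i) : ℝ))
      = (1 - γ) ^ M * γ ^ s * (∏ i, (Nat.choose (m i + r i) (r i) : ℝ)) := by
    rw [Finset.prod_mul_distrib, Finset.prod_mul_distrib, Finset.prod_pow_eq_pow_sum,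
      Finset.prod_pow_eq_pow_sum]
  have hprod2 : (∏ i, (1 - γ) ^ (m i) * γ ^ (r' i) * (Nat.choose (m i + r' i) (r' i) : ℝ))
      = (1 - γ) ^ M * γ ^ s * (∏ i, (Nat.choose (m i + r' i) (r' i) : ℝ)) := by
    rw [Finset.prod_mul_distrib, Finset.prod_mul_distrib, Finset.prod_pow_eq_pow_sum,
      Finset.prod_pow_eq_pow_sum, ← hss]
  rw [hprod1, hprod2]
  have harg : ((1 - γ) ^ M * γ ^ s * (∏ i, (Nat.choose (m i + r i) (r i) : ℝ))) *
      ((1 - γ) ^ M * γ ^ s * (∏ i, (Nat.choose (m i + r' i) (r' i) : ℝ)))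
      = ((1 - γ) ^ M * γ ^ s * K * Mm) ^ 2 * (R * R') / (A * B) := by
    have e1 : (∏ i, (Nat.choose (m i + r i) (r i) : ℝ)) = K * R * Mm / A :=
      eq_div_of_mul_eq hApos.ne' hC1
    have e2 : (∏ i, (Nat.choose (m i + r' i) (r' i) : ℝ)) = K * R' * Mm / B :=
      eq_div_of_mul_eq hBpos.ne' hC2
    rw [e1, e2]
    field_simp
  rw [harg, Real.sqrt_div (by positivity), Real.sqrt_mul (by positivity),
    Real.sqrt_sq (by positivity)]
  rw [Real.sqrt_mul hApos.le]
  have h2 : Real.sqrt A * Real.sqrt B ≠ 0 := by positivity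
  field_simp

lemma sum_fockδ_apply {q : ℕ} (S : Finset (Fin q → ℕ)) (α : (Fin q → ℕ) → ℂ) (x : Fin q → ℕ) :
    (∑ n ∈ S, α n • fockδ n) x = if x ∈ S then α x else 0 := by
  rw [Finset.sum_apply]
  simp only [Pi.smul_apply, fockδ, smul_eq_mul, mul_ite, mul_one, mul_zero]
  simp_rw [eq_comm (a := x)]
  exact Finset.sum_ite_eq' S x α

lemma ampDamp_sum_apply {q N : ℕ} (γ : ℝ) (r : Fin q → ℕ) (α : (Fin q → ℕ) → ℂ)
    (m : Fin q → ℕ) :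
    ampDamp γ r (∑ n ∈ simplex q N, α n • fockδ n) m =
      (((∏ i, Real.sqrt ((1 - γ) ^ (m i) * γ ^ (r i) * (Nat.choose (m i + r i) (r i) : ℝ))) : ℝ) : ℂ) *
        (if (∑ i, m i) + (∑ i, r i) = N then α (fun i => m i + r i) else 0) := by
  rw [ampDamp, sum_fockδ_apply]
  congr 2
  simp [simplex, Finset.Nat.mem_antidiagonalTuple, Finset.sum_add_distrib]

set_option maxHeartbeats 1600000 in
/-- inner products of amplitude-damped codewords.  For
`c = ∑_{n ∈ S_{q,N}} α_n |n⟩`, `c' = ∑_{n ∈ S_{q,N}} β_n |n⟩` and tuples `r, r'` with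
`|r|₁ = s ≤ N`, `|r'|₁ = s' ≤ N`: if `s ≠ s'` then `⟨A_r c, A_{r'} c'⟩ = 0`; if `s = s'`
then `⟨A_r c, A_{r'} c'⟩ = (1−γ)^{N−s} γ^s C(N,s) √(C(s;r) C(s;r')) ·
∑_{n ∈ S_{q,N}} conj(α_n) β_{n−r+r'} C(N−s; n−r)/√(C(N;n) C(N;n−r+r'))`, where summands in
which `n − r` has a negative entry vanish. -/
theorem amp_damp_inner_product (q N : ℕ) (hq : 2 ≤ q)
    (γ : ℝ) (hγ0 : 0 < γ) (hγ1 : γ < 1)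
    (α β : (Fin q → ℕ) → ℂ) (r r' : Fin q → ℕ) (s s' : ℕ)
    (hs : ∑ i, r i = s) (hs' : ∑ i, r' i = s') (hsN : s ≤ N) (hs'N : s' ≤ N) :
    (s ≠ s' →
      finner (ampDamp γ r (∑ n ∈ simplex q N, α n • fockδ n))
             (ampDamp γ r' (∑ n ∈ simplex q N, β n • fockδ n)) = 0) ∧
    (s = s' →
      finner (ampDamp γ r (∑ n ∈ simplex q N, α n • fockδ n))
             (ampDamp γ r' (∑ n ∈ simplex q N, β n • fockδ n)) =
        ((((1 - γ) ^ (N - s) * γ ^ s * (Nat.choose N s : ℝ) *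
            Real.sqrt ((multinat r : ℝ) * (multinat r' : ℝ))) : ℝ) : ℂ) *
          ∑ n ∈ simplex q N,
            (starRingEnd ℂ) (α n) * β (fun i => n i - r i + r' i) * ((klCoeff n r r' : ℝ) : ℂ)) := by
  constructor
  · intro hne
    rw [finner]
    apply finsum_eq_zero_of_forall_eq_zero
    intro m
    rw [ampDamp_sum_apply, ampDamp_sum_apply]
    by_cases h1 : (∑ i, m i) + (∑ i, r i) = N
    · have h2 : ¬ ((∑ i, m i) + (∑ i, r' i) = N) := by omega
      simp [h2]
    · simp [h1]
  · intro he
    subst he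
    subst hs
    have hsr : (∑ i, r i) = ∑ i, r' i := hs'.symm
    set T := simplex q (N - (∑ i, r i)) with hT
    have hmemT : ∀ m : Fin q → ℕ, m ∈ T ↔ ∑ i, m i = N - (∑ i, r i) := by
      intro m; rw [hT, simplex, Finset.Nat.mem_antidiagonalTuple]
    rw [finner]
    rw [finsum_eq_sum_of_support_subset _ (s := T) ?hsupp]
    case hsupp =>
      intro m hm
      simp only [Function.mem_support] at hm
      rw [Finset.mem_coe, hmemT]
      by_contra hmem
      apply hm
      rw [ampDamp_sum_apply]
      have : ¬ ((∑ i, m i) + (∑ i, r i) = N) := by omega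
      simp [this]
    -- now a finite sum over T
    rw [Finset.mul_sum]
    rw [← Finset.sum_filter_of_ne (p := fun n => ∀ i, r i ≤ n i)
      (f := fun n => ((((1 - γ) ^ (N - ∑ i, r i) * γ ^ (∑ i, r i) * (Nat.choose N (∑ i, r i) : ℝ) *
            Real.sqrt ((multinat r : ℝ) * (multinat r' : ℝ))) : ℝ) : ℂ) *
          ((starRingEnd ℂ) (α n) * β (fun i => n i - r i + r' i) * ((klCoeff n r r' : ℝ) : ℂ)))
      ?hvanish]
    case hvanish =>
      intro n _ hne
      by_contra hp
      apply hne
      have : klCoeff n r r' = 0 := by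
        rw [klCoeff, multZ]
        rw [if_neg ?_]
        · simp
        · push_neg at hp ⊢
          obtain ⟨i, hi⟩ := hp
          exact ⟨i, by push_cast; omega⟩
      simp [this]
    refine Finset.sum_nbij' (i := fun m => (fun i => m i + r i))
      (j := fun n => (fun i => n i - r i)) ?_ ?_ ?_ ?_ ?_
    · -- maps T into filter
      intro m hm
      rw [hmemT] at hm
      rw [Finset.mem_filter]
      constructor
      · rw [simplex, Finset.Nat.mem_antidiagonalTuple, Finset.sum_add_distrib, hm]
        omega
      · intro i; simp only []; omega
    · intro n hn
      rw [Finset.mem_filter, simplex, Finset.Nat.mem_antidiagonalTuple] at hn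
      rw [hmemT]
      try simp only []
      rw [Finset.sum_tsub_distrib _ (fun i _ => hn.2 i), hn.1]
    · intro m _; funext i; simp only []; omega
    · intro n hn
      rw [Finset.mem_filter] at hn
      funext i
      have := hn.2 i
      simp only []
      omega
    · -- per-term identity
      intro m hm
      rw [hmemT] at hm
      rw [ampDamp_sum_apply, ampDamp_sum_apply]
      have h1 : (∑ i, m i) + (∑ i, r i) = N := by omega
      have h2 : (∑ i, m i) + (∑ i, r' i) = N := by omega
      rw [if_pos h1, if_pos h2]
      have hβ : (fun i => (m i + r i) - r i + r' i) = fun i => m i + r' i := by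
        funext i; omega
      have hkl : klCoeff (fun i => m i + r i) r r'
          = (Nat.multinomial Finset.univ m : ℝ) /
            Real.sqrt ((Nat.multinomial Finset.univ (fun i => m i + r i) : ℝ) *
              (Nat.multinomial Finset.univ (fun i => m i + r' i) : ℝ)) := by
        simp only [klCoeff, multZ, multinat]
        rw [if_pos (fun i => by show (0:ℤ) ≤ ((m i + r i : ℕ) : ℤ) - ((r i : ℕ) : ℤ); omega)]
        rw [show (fun i => ((((fun i => m i + r i) i : ℕ) : ℤ) - ((r i : ℕ) : ℤ)).toNat) = m
          from funext fun i => by show ((((m i + r i : ℕ) : ℤ)) - ((r i : ℕ) : ℤ)).toNat = m i; omega, hβ]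
      have hw := main_real γ hγ0 hγ1 m r r' hsr
      rw [hm] at hw
      rw [Nat.sub_add_cancel hsN] at hw
      have hwc : (((∏ i, Real.sqrt ((1 - γ) ^ (m i) * γ ^ (r i) *
              ((Nat.choose (m i + r i) (r i)) : ℝ))) : ℝ) : ℂ) *
            (((∏ i, Real.sqrt ((1 - γ) ^ (m i) * γ ^ (r' i) *
              ((Nat.choose (m i + r' i) (r' i)) : ℝ))) : ℝ) : ℂ) =
          ((((1 - γ) ^ (N - ∑ i, r i) * γ ^ (∑ i, r i) * (Nat.choose N (∑ i, r i) : ℝ) *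
            Real.sqrt ((Nat.multinomial Finset.univ r : ℝ) *
              (Nat.multinomial Finset.univ r' : ℝ))) : ℝ) : ℂ) *
            ((klCoeff (fun i => m i + r i) r r' : ℝ) : ℂ) := by
        rw [hkl, ← Complex.ofReal_mul, ← Complex.ofReal_mul, hw]
      rw [map_mul, Complex.conj_ofReal, hβ]
      simp only [multinat]
      linear_combination ((starRingEnd ℂ) (α fun i => m i + r i) * β (fun i => m i + r' i)) * hwc
end

section
/- Let q ≥ 2, K ≥ 2, N ≥ t ≥ 0 be integers and γ ∈ ℝ with 0 < γ < 1. Suppose α^{(0)},…,α^{(K−1)} ∈ ℂ^{S_{q,N}} satisfy conditions (C1)–(C4) with parameter t, and set c_i = ∑_{n∈S_{q,N}} α^{(i)}_n δ_n in the q-mode Fock space. Then for all tuples r, r′ : Fin q → ℕ with |r|₁ ≤ t and |r′|₁ ≤ t: ⟨A_r c_i, A_{r′} c_j⟩ = 0 for all i ≠ j, and ⟨A_r c_i, A_{r′} c_i⟩ = ⟨A_r c_j, A_{r′} c_j⟩ for all i, j; i.e., the Knill–Laflamme conditions hold for the amplitude-damping error set, so the Fock state code with basis (c_i) corrects t amplitude-damping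 errors. -/
/-- Condition (C1): the rows of `α` are pairwise orthogonal. -/
def condC1 (q K N : ℕ) (α : Fin K → (Fin q → ℕ) → ℂ) : Prop :=
  ∀ i j : Fin K, i ≠ j → ∑ n ∈ simplex q N, (starRingEnd ℂ) (α i n) * α j n = 0

/-- Condition (C2): the rows of `α` have equal norms. -/
def condC2 (q K N : ℕ) (α : Fin K → (Fin q → ℕ) → ℂ) : Prop :=
  ∀ i j : Fin K,
    ∑ n ∈ simplex q N, Complex.normSq (α i n) = ∑ n ∈ simplex q N, Complex.normSq (α j n)

/-- Condition (C3): Knill–Laflamme orthogonality condition. -/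
def condC3 (q K N t : ℕ) (α : Fin K → (Fin q → ℕ) → ℂ) : Prop :=
  ∀ i j : Fin K, i ≠ j → ∀ e ∈ simplex q t, ∀ f ∈ simplex q t,
    ∑ n ∈ simplex q N,
      (starRingEnd ℂ) (α i n) * α j (fun k => n k - e k + f k) * ((klCoeff n e f : ℝ) : ℂ) = 0

/-- Condition (C4): Knill–Laflamme non-deformation condition. -/
def condC4 (q K N t : ℕ) (α : Fin K → (Fin q → ℕ) → ℂ) : Prop :=
  ∀ i j : Fin K, i ≠ j → ∀ e ∈ simplex q t, ∀ f ∈ simplex q t,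
    ∑ n ∈ simplex q N,
      ((starRingEnd ℂ) (α i n) * α i (fun k => n k - e k + f k) -
        (starRingEnd ℂ) (α j n) * α j (fun k => n k - e k + f k)) * ((klCoeff n e f : ℝ) : ℂ) = 0

/-- The `i`-th basis state of the Fock state code with coefficients `α`. -/
noncomputable def fockCode {q K : ℕ} (N : ℕ) (α : Fin K → (Fin q → ℕ) → ℂ) (i : Fin K) :
    Fock q :=
  ∑ n ∈ simplex q N, α i n • fockδ n

open Finset Nat ComplexConjugate

lemma mem_simplex {q N : ℕ} {n : Fin q → ℕ} : n ∈ simplex q N ↔ ∑ i, n i = N :=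
  Finset.Nat.mem_antidiagonalTuple

lemma add_mem_simplex_iff {q N : ℕ} {m r : Fin q → ℕ} (hr : ∑ k, r k ≤ N) :
    m + r ∈ simplex q N ↔ m ∈ simplex q (N - ∑ k, r k) := by
  simp only [mem_simplex, Pi.add_apply, sum_add_distrib]
  omega

lemma sum_add_eq_of_add_mem_simplex {q N : ℕ} {m r : Fin q → ℕ} (h : m + r ∈ simplex q N) :
    ∑ k, m k + ∑ k, r k = N := by
  simpa only [mem_simplex, Pi.add_apply, sum_add_distrib] using h

theorem sum_simplex_eq_sum_simplex_add {M : Type*} [AddCommMonoid M] {q N : ℕ}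
    {g : (Fin q → ℕ) → M} {r : Fin q → ℕ} (hr : ∑ k, r k ≤ N) (hg : ∀ n, ¬ r ≤ n → g n = 0) :
    ∑ n ∈ simplex q N, g n = ∑ m ∈ simplex q (N - ∑ k, r k), g (m + r) := by
  symm
  refine sum_bij_ne_zero (fun m _ _ => m + r) (fun m hm _ => (add_mem_simplex_iff hr).mpr hm)
    (fun _ _ _ _ _ _ => add_right_cancel) (fun n hn hgn => ?_) fun _ _ _ => rfl
  have hrn : r ≤ n := by_contra fun h => hgn (hg n h)
  have hsub : n - r + r = n := tsub_add_cancel_of_le hrn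
  refine ⟨n - r, (add_mem_simplex_iff hr).mp ?_, ?_, hsub⟩ <;> rwa [hsub]

theorem sum_piAntidiag_prod_choose {ι : Type*} [DecidableEq ι] (s : Finset ι) (m : ι → ℕ)
    (u : ℕ) : ∑ d ∈ s.piAntidiag u, ∏ k ∈ s, (m k).choose (d k) = (∑ k ∈ s, m k).choose u := by
  induction s using Finset.cons_induction generalizing u with
  | empty => cases u <;> simp
  | cons i s hi ih =>
    rw [piAntidiag_cons hi, sum_disjiUnion, sum_cons, Nat.add_choose_eq]
    refine sum_congr rfl fun ab _ => ?_
    rw [sum_map, ← ih ab.2, mul_sum]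
    refine sum_congr rfl fun g hg => ?_
    have hgi : g i = 0 := by_contra fun h => hi ((mem_piAntidiag.mp hg).2 i h)
    rw [prod_cons]
    simp only [addRightEmbedding_apply, Pi.add_apply, hgi, zero_add]
    congr 1
    refine prod_congr rfl fun k hk => ?_
    simp [show k ≠ i from fun h => hi (h ▸ hk)]

theorem sum_simplex_prod_choose {q : ℕ} (m : Fin q → ℕ) (u : ℕ) :
    ∑ d ∈ simplex q u, ∏ k, (m k).choose (d k) = (∑ k, m k).choose u := by
  rw [simplex, ← piAntidiag_univ_fin_eq_antidiagonalTuple]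
  exact sum_piAntidiag_prod_choose _ m u

theorem multinat_mul_multinat_mul_choose {q : ℕ} (a b : Fin q → ℕ) :
    multinat a * multinat b * (∑ k, a k + ∑ k, b k).choose (∑ k, b k) =
      multinat (a + b) * ∏ k, (a k + b k).choose (b k) := by
  apply Nat.eq_of_mul_eq_mul_right (by positivity : 0 < (∏ k, (a k)!) * ∏ k, (b k)!)
  calc multinat a * multinat b * (∑ k, a k + ∑ k, b k).choose (∑ k, b k) *
        ((∏ k, (a k)!) * ∏ k, (b k)!)
      = (∑ k, a k + ∑ k, b k).choose (∑ k, b k) * ((∏ k, (a k)!) * multinat a) *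
          ((∏ k, (b k)!) * multinat b) := by ring
    _ = (∑ k, (a + b) k)! := by
      rw [multinat, multinat, multinomial_spec, multinomial_spec,
        add_choose_mul_factorial_mul_factorial, ← sum_add_distrib]
      rfl
    _ = multinat (a + b) * ∏ k, ((a k + b k).choose (b k) * (a k)! * (b k)!) := by
      simp only [add_choose_mul_factorial_mul_factorial]
      rw [multinat, ← multinomial_spec, mul_comm]
      rfl
    _ = _ := by rw [prod_mul_distrib, prod_mul_distrib]; ring

lemma multZ_natCast_sub_of_le {q : ℕ} {n e : Fin q → ℕ} (h : e ≤ n) :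
    multZ (fun k => (n k : ℤ) - e k) = multinat (n - e) := by
  rw [multZ, if_pos fun k => by simpa using h k, multinat]
  congr 1
  funext k
  have := h k
  simp only [Pi.sub_apply]
  omega

lemma multZ_natCast_sub_of_not_le {q : ℕ} {n e : Fin q → ℕ} (h : ¬ e ≤ n) :
    multZ (fun k => (n k : ℤ) - e k) = 0 := by
  obtain ⟨k, hk⟩ : ∃ k, n k < e k := by simpa [Pi.le_def] using h
  rw [multZ, if_neg fun hn => by have := hn k; omega]

theorem multinat_mul_multZ_mul_choose {q : ℕ} (m d : Fin q → ℕ) :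
    multinat d * multZ (fun k => (m k : ℤ) - d k) * (∑ k, m k).choose (∑ k, d k) =
      multinat m * ∏ k, (m k).choose (d k) := by
  by_cases h : d ≤ m
  · have hsum : ∑ k, (m - d) k + ∑ k, d k = ∑ k, m k := by
      rw [← sum_add_distrib]
      exact sum_congr rfl fun k _ => Nat.sub_add_cancel (h k)
    have := multinat_mul_multinat_mul_choose (m - d) d
    rw [hsum, tsub_add_cancel_of_le h] at this
    simp only [Pi.sub_apply, Nat.sub_add_cancel (h _)] at this
    rw [multZ_natCast_sub_of_le h, mul_comm (multinat d), this]
  · obtain ⟨k, hk⟩ : ∃ k, m k < d k := by simpa [Pi.le_def] using h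
    rw [multZ_natCast_sub_of_not_le h, prod_eq_zero (mem_univ k) (Nat.choose_eq_zero_of_lt hk)]
    simp

theorem sum_simplex_multinat_mul_multZ {q u : ℕ} (m : Fin q → ℕ) (hu : u ≤ ∑ k, m k) :
    ∑ d ∈ simplex q u, multinat d * multZ (fun k => (m k : ℤ) - d k) = multinat m := by
  apply Nat.eq_of_mul_eq_mul_right (Nat.choose_pos hu)
  calc (∑ d ∈ simplex q u, multinat d * multZ (fun k => (m k : ℤ) - d k)) *
        (∑ k, m k).choose u
      = ∑ d ∈ simplex q u, multinat m * ∏ k, (m k).choose (d k) := by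
        rw [sum_mul]
        refine sum_congr rfl fun d hd => ?_
        rw [← multinat_mul_multZ_mul_choose, mem_simplex.mp hd]
    _ = multinat m * (∑ k, m k).choose u := by rw [← mul_sum, sum_simplex_prod_choose]

lemma add_tsub_add_add_of_le {q : ℕ} {m d : Fin q → ℕ} (r r' : Fin q → ℕ) (h : d ≤ m) :
    (fun k => (m + r) k - (r + d) k + (r' + d) k) = m + r' := by
  funext k
  have : d k ≤ m k := h k
  simp only [Pi.add_apply]
  omega

lemma klCoeff_eq_zero_of_not_le {q : ℕ} {n e : Fin q → ℕ} (f : Fin q → ℕ) (h : ¬ e ≤ n) :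
    klCoeff n e f = 0 := by
  rw [klCoeff, multZ_natCast_sub_of_not_le h, Nat.cast_zero, zero_div]

lemma klCoeff_add_add {q : ℕ} (m r r' d : Fin q → ℕ) :
    klCoeff (m + r) (r + d) (r' + d) =
      multZ (fun k => (m k : ℤ) - d k) / √(multinat (m + r) * multinat (m + r')) := by
  have hnum : (fun k => ((m + r) k : ℤ) - ((r + d) k : ℤ)) = fun k => (m k : ℤ) - d k := by
    funext k
    simp only [Pi.add_apply]
    push_cast
    ring
  by_cases h : d ≤ m
  · rw [klCoeff, hnum, add_tsub_add_add_of_le r r' h]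
  · rw [klCoeff, hnum, multZ_natCast_sub_of_not_le h]
    simp

theorem multinat_div_mul_eq_sum_klCoeff {q u : ℕ} (b : (Fin q → ℕ) → ℂ) (m r r' : Fin q → ℕ)
    (hu : u ≤ ∑ k, m k) :
    ((multinat m / √(multinat (m + r) * multinat (m + r')) : ℝ) : ℂ) * b (m + r') =
      ∑ d ∈ simplex q u, (multinat d : ℂ) *
        (b (fun k => (m + r) k - (r + d) k + (r' + d) k) *
          (klCoeff (m + r) (r + d) (r' + d) : ℂ)) := by
  rw [← sum_simplex_multinat_mul_multZ m hu, Nat.cast_sum, sum_div, Complex.ofReal_sum, sum_mul]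
  refine sum_congr rfl fun d _ => ?_
  rw [klCoeff_add_add]
  by_cases h : d ≤ m
  · rw [add_tsub_add_add_of_le r r' h]
    push_cast
    ring
  · rw [multZ_natCast_sub_of_not_le h]
    simp

noncomputable def klSum {q : ℕ} (N : ℕ) (a b : (Fin q → ℕ) → ℂ) (e f : Fin q → ℕ) : ℂ :=
  ∑ n ∈ simplex q N, conj (a n) * b (fun k => n k - e k + f k) * (klCoeff n e f : ℂ)

lemma condC3.klSum_eq_zero {q K N t : ℕ} {α : Fin K → (Fin q → ℕ) → ℂ} (h : condC3 q K N t α)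
    {i j : Fin K} (hij : i ≠ j) {e f : Fin q → ℕ} (he : e ∈ simplex q t) (hf : f ∈ simplex q t) :
    klSum N (α i) (α j) e f = 0 :=
  h i j hij e he f hf

lemma condC4.klSum_eq {q K N t : ℕ} {α : Fin K → (Fin q → ℕ) → ℂ} (h : condC4 q K N t α)
    (i j : Fin K) {e f : Fin q → ℕ} (he : e ∈ simplex q t) (hf : f ∈ simplex q t) :
    klSum N (α i) (α i) e f = klSum N (α j) (α j) e f := by
  obtain rfl | hij := eq_or_ne i j
  · rfl
  rw [← sub_eq_zero, klSum, klSum, ← sum_sub_distrib]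
  simpa only [sub_mul] using h i j hij e he f hf

noncomputable def dampFactor {q : ℕ} (γ : ℝ) (r m : Fin q → ℕ) : ℝ :=
  ∏ i, √((1 - γ) ^ (m i) * γ ^ (r i) * (Nat.choose (m i + r i) (r i) : ℝ))

lemma ampDamp_apply {q : ℕ} (γ : ℝ) (r : Fin q → ℕ) (u : Fock q) (m : Fin q → ℕ) :
    ampDamp γ r u m = dampFactor γ r m * u (m + r) :=
  rfl

lemma dampFactor_eq_sqrt {q : ℕ} {γ : ℝ} (hγ0 : 0 ≤ γ) (hγ1 : γ ≤ 1) (r m : Fin q → ℕ) :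
    dampFactor γ r m = √((1 - γ) ^ (∑ k, m k) * γ ^ (∑ k, r k) *
      (multinat m * multinat r * (∑ k, m k + ∑ k, r k).choose (∑ k, r k) / multinat (m + r))) := by
  have hchoose : (∏ k, ((m k + r k).choose (r k) : ℝ)) =
      multinat m * multinat r * (∑ k, m k + ∑ k, r k).choose (∑ k, r k) / multinat (m + r) := by
    have hpos : (0 : ℝ) < multinat (m + r) := by exact_mod_cast Nat.multinomial_pos _ _
    rw [eq_div_iff hpos.ne', mul_comm]
    exact_mod_cast (multinat_mul_multinat_mul_choose m r).symm
  have h1γ : 0 ≤ 1 - γ := by linarith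
  rw [dampFactor, ← Real.sqrt_prod _ fun k _ => by positivity,
    prod_mul_distrib, prod_mul_distrib, prod_pow_eq_pow_sum, prod_pow_eq_pow_sum, hchoose]

noncomputable def dampWeight {q : ℕ} (γ : ℝ) (N : ℕ) (r r' : Fin q → ℕ) : ℝ :=
  γ ^ (∑ k, r k) * (1 - γ) ^ (N - ∑ k, r k) * N.choose (∑ k, r k) *
    √(multinat r * multinat r')

lemma dampFactor_mul_dampFactor {q N : ℕ} {γ : ℝ} (hγ0 : 0 ≤ γ) (hγ1 : γ ≤ 1)
    {r r' m : Fin q → ℕ} (hrr' : ∑ k, r' k = ∑ k, r k) (hm : ∑ k, m k + ∑ k, r k = N) :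
    dampFactor γ r m * dampFactor γ r' m =
      dampWeight γ N r r' * (multinat m / √(multinat (m + r) * multinat (m + r'))) := by
  have h1γ : 0 ≤ 1 - γ := by linarith
  have hp : (0 : ℝ) < multinat (m + r) := by exact_mod_cast Nat.multinomial_pos _ _
  have hp' : (0 : ℝ) < multinat (m + r') := by exact_mod_cast Nat.multinomial_pos _ _
  have hM : N - ∑ k, r k = ∑ k, m k := by omega
  rw [dampFactor_eq_sqrt hγ0 hγ1, dampFactor_eq_sqrt hγ0 hγ1, ← Real.sqrt_mul (by positivity),
    dampWeight, hrr', hM, hm]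
  set x : ℝ := γ ^ (∑ k, r k) * (1 - γ) ^ (∑ k, m k) * N.choose (∑ k, r k) * multinat m
  have hx : 0 ≤ x := by positivity
  calc _ = √(x ^ 2 * (multinat r * multinat r') / (multinat (m + r) * multinat (m + r'))) := by
        congr 1
        field_simp
        ring
    _ = _ := by
        rw [Real.sqrt_div' _ (by positivity), Real.sqrt_mul' _ (by positivity), Real.sqrt_sq hx]
        ring

lemma fockCode_apply {q K : ℕ} (N : ℕ) (α : Fin K → (Fin q → ℕ) → ℂ) (i : Fin K)
    (n : Fin q → ℕ) : fockCode N α i n = if n ∈ simplex q N then α i n else 0 := by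
  simp only [fockCode, Finset.sum_apply, Pi.smul_apply, fockδ, smul_eq_mul, mul_ite, mul_one,
    mul_zero]
  exact sum_ite_eq (simplex q N) n (α i)

lemma ampDamp_fockCode_eq_zero {q K N : ℕ} (γ : ℝ) (α : Fin K → (Fin q → ℕ) → ℂ) (i : Fin K)
    {r m : Fin q → ℕ} (h : m + r ∉ simplex q N) : ampDamp γ r (fockCode N α i) m = 0 := by
  rw [ampDamp_apply, fockCode_apply, if_neg h, mul_zero]

theorem finner_ampDamp_fockCode_eq_zero {q K N : ℕ} (γ : ℝ) (α : Fin K → (Fin q → ℕ) → ℂ)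
    (i j : Fin K) {r r' : Fin q → ℕ} (hrr' : ∑ k, r' k ≠ ∑ k, r k) :
    finner (ampDamp γ r (fockCode N α i)) (ampDamp γ r' (fockCode N α j)) = 0 := by
  refine finsum_eq_zero_of_forall_eq_zero fun m => ?_
  by_cases hm : m + r ∈ simplex q N
  · have hm' : m + r' ∉ simplex q N := by
      simp only [mem_simplex, Pi.add_apply, sum_add_distrib] at hm ⊢
      omega
    rw [ampDamp_fockCode_eq_zero γ α j hm', mul_zero]
  · rw [ampDamp_fockCode_eq_zero γ α i hm, map_zero, zero_mul]

theorem conj_ampDamp_mul_ampDamp_fockCode {q K N u : ℕ} {γ : ℝ} (hγ0 : 0 ≤ γ) (hγ1 : γ ≤ 1)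
    (α : Fin K → (Fin q → ℕ) → ℂ) (i j : Fin K) {r r' m : Fin q → ℕ}
    (hrr' : ∑ k, r' k = ∑ k, r k) (hm : m + r ∈ simplex q N) (hu : u ≤ ∑ k, m k) :
    conj (ampDamp γ r (fockCode N α i) m) * ampDamp γ r' (fockCode N α j) m =
      (dampWeight γ N r r' : ℂ) * ∑ d ∈ simplex q u, (multinat d : ℂ) *
        (conj (α i (m + r)) * α j (fun k => (m + r) k - (r + d) k + (r' + d) k) *
          (klCoeff (m + r) (r + d) (r' + d) : ℂ)) := by
  have hsum := sum_add_eq_of_add_mem_simplex hm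
  have hm' : m + r' ∈ simplex q N := by
    rwa [mem_simplex, Pi.add_def, sum_add_distrib, hrr']
  rw [ampDamp_apply, ampDamp_apply, fockCode_apply, fockCode_apply, if_pos hm, if_pos hm',
    map_mul, Complex.conj_ofReal]
  calc _ = ((dampFactor γ r m * dampFactor γ r' m : ℝ) : ℂ) *
        (conj (α i (m + r)) * α j (m + r')) := by push_cast; ring
    _ = (dampWeight γ N r r' : ℂ) * (conj (α i (m + r)) *
        (((multinat m / √(multinat (m + r) * multinat (m + r')) : ℝ) : ℂ) * α j (m + r'))) := by
      rw [dampFactor_mul_dampFactor hγ0 hγ1 hrr' hsum]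
      push_cast
      ring
    _ = _ := by
      rw [multinat_div_mul_eq_sum_klCoeff _ m r r' hu, mul_sum]
      exact congrArg _ (sum_congr rfl fun d _ => by ring)

theorem finner_ampDamp_fockCode {q K N t : ℕ} {γ : ℝ} (hγ0 : 0 ≤ γ) (hγ1 : γ ≤ 1)
    (α : Fin K → (Fin q → ℕ) → ℂ) (i j : Fin K) {r r' : Fin q → ℕ} (htN : t ≤ N)
    (hr : ∑ k, r k ≤ t) (hrr' : ∑ k, r' k = ∑ k, r k) :
    finner (ampDamp γ r (fockCode N α i)) (ampDamp γ r' (fockCode N α j)) =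
      (dampWeight γ N r r' : ℂ) *
        ∑ d ∈ simplex q (t - ∑ k, r k),
          (multinat d : ℂ) * klSum N (α i) (α j) (r + d) (r' + d) := by
  have hrN : ∑ k, r k ≤ N := hr.trans htN
  have hsupp : Function.support (fun m => conj (ampDamp γ r (fockCode N α i) m) *
      ampDamp γ r' (fockCode N α j) m) ⊆ simplex q (N - ∑ k, r k) := fun m hm => by
    by_contra h
    rw [mem_coe, ← add_mem_simplex_iff hrN] at h
    exact hm (by simp only [ampDamp_fockCode_eq_zero γ α i h, map_zero, zero_mul])
  have hvanish : ∀ n, ¬ r ≤ n → ∑ d ∈ simplex q (t - ∑ k, r k), (multinat d : ℂ) *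
      (conj (α i n) * α j (fun k => n k - (r + d) k + (r' + d) k) *
        (klCoeff n (r + d) (r' + d) : ℂ)) = 0 := fun n hn =>
    sum_eq_zero fun d _ => by
      rw [klCoeff_eq_zero_of_not_le _ fun h => hn (le_self_add.trans h)]
      simp
  have hreindex : ∑ d ∈ simplex q (t - ∑ k, r k), (multinat d : ℂ) *
      klSum N (α i) (α j) (r + d) (r' + d) =
      ∑ m ∈ simplex q (N - ∑ k, r k), ∑ d ∈ simplex q (t - ∑ k, r k), (multinat d : ℂ) *
        (conj (α i (m + r)) * α j (fun k => (m + r) k - (r + d) k + (r' + d) k) *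
          (klCoeff (m + r) (r + d) (r' + d) : ℂ)) := by
    simp only [klSum, mul_sum]
    rw [sum_comm, sum_simplex_eq_sum_simplex_add hrN hvanish]
  rw [finner, finsum_eq_sum_of_support_subset _ hsupp, hreindex, mul_sum]
  refine sum_congr rfl fun m hm => ?_
  have hm' := (add_mem_simplex_iff hrN).mpr hm
  exact conj_ampDamp_mul_ampDamp_fockCode hγ0 hγ1 α i j hrr' hm'
    (by have := sum_add_eq_of_add_mem_simplex hm'; omega)

theorem fock_code_corrects_AD_general (q K N t : ℕ) (htN : t ≤ N)
    (γ : ℝ) (hγ0 : 0 < γ) (hγ1 : γ < 1)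
    (α : Fin K → (Fin q → ℕ) → ℂ)
    (hC3 : condC3 q K N t α) (hC4 : condC4 q K N t α) :
    ∀ r r' : Fin q → ℕ, (∑ i, r i) ≤ t → (∑ i, r' i) ≤ t →
      (∀ i j : Fin K, i ≠ j →
        finner (ampDamp γ r (fockCode N α i)) (ampDamp γ r' (fockCode N α j)) = 0) ∧
      (∀ i j : Fin K,
        finner (ampDamp γ r (fockCode N α i)) (ampDamp γ r' (fockCode N α i)) =
          finner (ampDamp γ r (fockCode N α j)) (ampDamp γ r' (fockCode N α j))) := by
  intro r r' hr hr'
  by_cases hrr' : ∑ k, r' k = ∑ k, r k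
  · have hinner := fun i j => finner_ampDamp_fockCode hγ0.le hγ1.le α i j htN hr hrr'
    have he : ∀ d ∈ simplex q (t - ∑ k, r k), r + d ∈ simplex q t := fun d hd => by
      rw [add_comm, add_mem_simplex_iff hr]
      exact hd
    have hf : ∀ d ∈ simplex q (t - ∑ k, r k), r' + d ∈ simplex q t := fun d hd => by
      rw [add_comm, add_mem_simplex_iff hr', hrr']
      exact hd
    refine ⟨fun i j hij => ?_, fun i j => ?_⟩
    · rw [hinner, sum_eq_zero fun d hd => by
        rw [hC3.klSum_eq_zero hij (he d hd) (hf d hd), mul_zero], mul_zero]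
    · rw [hinner, hinner]
      exact congrArg _ (sum_congr rfl fun d hd => by rw [hC4.klSum_eq i j (he d hd) (hf d hd)])
  · simp only [finner_ampDamp_fockCode_eq_zero γ α _ _ hrr', implies_true, and_self]

/-- if the coefficient vectors `α^{(0)},…,α^{(K−1)}` satisfy (C1)–(C4) with
parameter `t`, then the Fock state code with basis `c_i = ∑_{n ∈ S_{q,N}} α^{(i)}_n |n⟩`
satisfies the Knill–Laflamme conditions for the amplitude-damping error set: for all
`r, r'` with `|r|₁ ≤ t`, `|r'|₁ ≤ t`, `⟨A_r c_i, A_{r'} c_j⟩ = 0` for `i ≠ j` and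
`⟨A_r c_i, A_{r'} c_i⟩ = ⟨A_r c_j, A_{r'} c_j⟩` for all `i, j`; i.e., the code corrects
`t` amplitude-damping errors. -/
theorem fock_code_corrects_AD (q K N t : ℕ) (hq : 2 ≤ q) (hK : 2 ≤ K) (htN : t ≤ N)
    (γ : ℝ) (hγ0 : 0 < γ) (hγ1 : γ < 1)
    (α : Fin K → (Fin q → ℕ) → ℂ)
    (hC1 : condC1 q K N α) (hC2 : condC2 q K N α)
    (hC3 : condC3 q K N t α) (hC4 : condC4 q K N t α) :
    ∀ r r' : Fin q → ℕ, (∑ i, r i) ≤ t → (∑ i, r' i) ≤ t →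
      (∀ i j : Fin K, i ≠ j →
        finner (ampDamp γ r (fockCode N α i)) (ampDamp γ r' (fockCode N α j)) = 0) ∧
      (∀ i j : Fin K,
        finner (ampDamp γ r (fockCode N α i)) (ampDamp γ r' (fockCode N α i)) =
          finner (ampDamp γ r (fockCode N α j)) (ampDamp γ r' (fockCode N α j))) :=
  fock_code_corrects_AD_general q K N t htN γ hγ0 hγ1 α hC3 hC4
end

section
/- Let K ≥ 2 and t ≥ 2 be integers and set N = q = (K−1)t(t+1). Then there exists a set B ⊆ S_{N,N} such that d₁(x,y) ≥ t+1 for all distinct x, y ∈ B, and |B| ≥ (K−1)·C(N−1, t) + 1, where C(N−1,t) = C((K−1)t(t+1)−1, t) is the ordinary binomial coefficient. -/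
/-- The ℓ₁ distance `d₁(x,y) = (1/2) ∑ i, |x i − y i|` on the discrete simplex (the sum of
absolute differences is even for tuples with equal sums, so division by 2 is exact). -/
def d1 {q : ℕ} (x y : Fin q → ℕ) : ℕ := (∑ i, ((x i : ℤ) - (y i : ℤ)).natAbs) / 2

open Finset

namespace Nat

theorem le_choose_mul_self (m : ℕ) {t : ℕ} (ht : 0 < t) : m ≤ (m * t).choose t := by
  induction m with
  | zero => exact Nat.zero_le _
  | succ m ih =>
    obtain ⟨s, rfl⟩ : ∃ s, t = s + 1 := ⟨t - 1, by omega⟩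
    have hpos := Nat.choose_pos (Nat.le_add_left s (m * (s + 1)))
    have hmono := Nat.choose_le_choose (s + 1) (Nat.le_add_right (m * (s + 1)) s)
    calc m + 1 ≤ (m * (s + 1) + s).choose s + (m * (s + 1) + s).choose (s + 1) := by omega
      _ = ((m + 1) * (s + 1)).choose (s + 1) := by
          rw [← Nat.choose_succ_succ, Nat.succ_eq_add_one]; congr 1; ring

theorem choose_mul_choose_add_one_le (a : ℕ) {b k : ℕ} (hk : 0 < k) :
    a.choose k * b.choose k + 1 ≤ (a + b).choose b := by
  rcases le_or_gt k b with hkb | hbk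
  · have hsub : {(k, b - k), (0, b)} ⊆ antidiagonal b := by
      simp [insert_subset_iff, hkb]
    calc a.choose k * b.choose k + 1
        = ∑ ij ∈ {(k, b - k), (0, b)}, a.choose ij.1 * b.choose ij.2 := by
          rw [sum_pair (by simp [hk.ne']), Nat.choose_symm hkb]; simp
      _ ≤ (a + b).choose b := (Nat.add_choose_eq a b b).symm ▸ sum_le_sum_of_subset hsub
  · rw [Nat.choose_eq_zero_of_lt hbk, mul_zero, zero_add]
    exact Nat.choose_pos (Nat.le_add_left b a)

end Nat

theorem card_simplex (q n : ℕ) : #(simplex q n) = (q + n - 1).choose n := by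
  rw [simplex, card_eq_of_equiv_fintype
    ((Equiv.subtypeEquivRight fun _ => Nat.mem_antidiagonalTuple).trans
      (Sym.equivNatSumOfFintype (Fin q) n).symm), Sym.card_sym_eq_choose, Fintype.card_fin]

theorem natAbs_sub_le_d1 {q : ℕ} {x y : Fin q → ℕ} (hsum : ∑ i, x i = ∑ i, y i) (k : Fin q) :
    ((x k : ℤ) - y k).natAbs ≤ d1 x y := by
  have htotal : ∑ i, ((x i : ℤ) - y i) = 0 := by
    rw [sum_sub_distrib, sub_eq_zero]; exact_mod_cast hsum
  have hrest : ∑ i ∈ univ.erase k, ((x i : ℤ) - y i) = -((x k : ℤ) - y k) := by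
    rw [← add_sum_erase _ _ (mem_univ k)] at htotal; linarith
  have : 2 * ((x k : ℤ) - y k).natAbs ≤ ∑ i, ((x i : ℤ) - y i).natAbs := by
    rw [← add_sum_erase _ _ (mem_univ k)]
    have := Int.natAbs_sum_le (univ.erase k) fun i => (x i : ℤ) - y i
    rw [hrest, Int.natAbs_neg] at this
    omega
  unfold d1
  omega

theorem le_d1_of_dvd {q d : ℕ} {x y : Fin q → ℕ} (hsum : ∑ i, x i = ∑ i, y i)
    (hx : ∀ i, d ∣ x i) (hy : ∀ i, d ∣ y i) (hne : x ≠ y) : d ≤ d1 x y := by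
  obtain ⟨k, hk⟩ := Function.ne_iff.mp hne
  refine le_trans (Nat.le_of_dvd ?_ ?_) (natAbs_sub_le_d1 hsum k)
  · simpa [sub_eq_zero] using hk
  · exact Int.natCast_dvd.mp
      (dvd_sub (Int.natCast_dvd_natCast.mpr (hx k)) (Int.natCast_dvd_natCast.mpr (hy k)))

theorem exists_l1_code_card_eq_choose (q n d : ℕ) (hd : 0 < d) :
    ∃ B : Finset (Fin q → ℕ), (∀ x ∈ B, ∑ i, x i = d * n) ∧
      (∀ x ∈ B, ∀ y ∈ B, x ≠ y → d ≤ d1 x y) ∧ #B = (q + n - 1).choose n := by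
  have hsum : ∀ x ∈ simplex q n, ∑ i, (d • x) i = d * n := fun x hx => by
    simp [← mul_sum, Nat.mem_antidiagonalTuple.mp hx]
  refine ⟨(simplex q n).map ⟨(d • ·), smul_right_injective _ hd.ne'⟩, ?_, ?_, ?_⟩
  · simpa using hsum
  · simp only [mem_map, Function.Embedding.coeFn_mk]
    rintro _ ⟨x, hx, rfl⟩ _ ⟨y, hy, rfl⟩ hne
    exact le_d1_of_dvd ((hsum x hx).trans (hsum y hy).symm) (fun i => dvd_mul_right d (x i))
      (fun i => dvd_mul_right d (y i)) hne
  · rw [card_map, card_simplex]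

theorem exists_l1_code_general (K t : ℕ) (ht : 2 ≤ t) :
    ∃ B : Finset (Fin ((K - 1) * t * (t + 1)) → ℕ),
      (∀ x ∈ B, ∑ i, x i = (K - 1) * t * (t + 1)) ∧
      (∀ x ∈ B, ∀ y ∈ B, x ≠ y → t + 1 ≤ d1 x y) ∧
      (K - 1) * Nat.choose ((K - 1) * t * (t + 1) - 1) t + 1 ≤ B.card := by
  set m := K - 1
  set N := m * t * (t + 1)
  obtain ⟨B, hsum, hdist, hcard⟩ := exists_l1_code_card_eq_choose N (m * t) (t + 1) t.succ_pos
  refine ⟨B, fun x hx => (hsum x hx).trans (by ring), hdist, ?_⟩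
  have hN : N - 1 + m * t = N + m * t - 1 := by
    have : m * t ≤ N := Nat.le_mul_of_pos_right _ t.succ_pos
    omega
  calc m * (N - 1).choose t + 1 ≤ (N - 1).choose t * (m * t).choose t + 1 := by
        rw [mul_comm]; gcongr; exact Nat.le_choose_mul_self m (by omega)
    _ ≤ (N - 1 + m * t).choose (m * t) := Nat.choose_mul_choose_add_one_le _ (by omega)
    _ = #B := by rw [hcard, hN]

/-- for integers `K ≥ 2`, `t ≥ 2` and `N = q = (K−1)t(t+1)`, there exists an
ℓ₁ code `B ⊆ S_{N,N}` with minimum distance `≥ t+1` and size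
`|B| ≥ (K−1)·C((K−1)t(t+1)−1, t) + 1`. -/
theorem exists_l1_code (K t : ℕ) (hK : 2 ≤ K) (ht : 2 ≤ t) :
    ∃ B : Finset (Fin ((K - 1) * t * (t + 1)) → ℕ),
      (∀ x ∈ B, ∑ i, x i = (K - 1) * t * (t + 1)) ∧
      (∀ x ∈ B, ∀ y ∈ B, x ≠ y → t + 1 ≤ d1 x y) ∧
      (K - 1) * Nat.choose ((K - 1) * t * (t + 1) - 1) t + 1 ≤ B.card :=
  exists_l1_code_general K t ht
end

section
/- For all integers K ≥ 2 and t ≥ 2: C((K−1)t² + 2(K−1)t − 1, (K−1)t) ≥ (K−1) · C((K−1)t(t+1) − 1, t), where C(·,·) denotes the ordinary binomial coefficient. -/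
/-!
Write `m = K - 1`. Since `C(n, k + 1) = C(n, k) (n - k) / (k + 1)`, passing from `C(n₂, t)` to
`C(n₂, t + 1)` with `n₂ = m t (t + 1) - 1` gains a factor of at least `m`. Enlarging the top to
`n₁ = m t² + 2 m t - 1` and then the bottom from `t + 1` to `m t ≤ n₁ / 2` only increases the
binomial coefficient. For `m = 1` the bottom `t` already agrees and only the top has to grow.
-/

namespace Nat

theorem choose_le_choose_of_le_of_le_half {n a b : ℕ} (hab : a ≤ b) (hb : b ≤ n / 2) :
    n.choose a ≤ n.choose b := by
  induction b, hab using Nat.le_induction with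
  | base => exact le_rfl
  | succ b _ ih => exact (ih (by omega)).trans (choose_le_succ_of_lt_half_left (by omega))

theorem mul_choose_le_choose_succ {m n k : ℕ} (h : m * (k + 1) ≤ n - k) :
    m * n.choose k ≤ n.choose (k + 1) := by
  refine Nat.le_of_mul_le_mul_right ?_ k.succ_pos
  calc m * n.choose k * (k + 1) = n.choose k * (m * (k + 1)) := by ring
    _ ≤ n.choose k * (n - k) := Nat.mul_le_mul_left _ h
    _ = n.choose (k + 1) * (k + 1) := (choose_succ_right_eq n k).symm

end Nat

/-- for all integers `K ≥ 2` and `t ≥ 2`,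
`C((K−1)t² + 2(K−1)t − 1, (K−1)t) ≥ (K−1) · C((K−1)t(t+1) − 1, t)`. -/
theorem binomial_inequality (K t : ℕ) (hK : 2 ≤ K) (ht : 2 ≤ t) :
    (K - 1) * Nat.choose ((K - 1) * t * (t + 1) - 1) t ≤
      Nat.choose ((K - 1) * t ^ 2 + 2 * (K - 1) * t - 1) ((K - 1) * t) := by
  set m := K - 1
  have hn₂ : m * t * (t + 1) = m * t * t + m * t := by ring
  have hn₁ : m * t ^ 2 + 2 * m * t = m * t * t + 2 * (m * t) := by ring
  obtain hm | hm : m = 1 ∨ 2 ≤ m := by omega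
  · simp only [hm, one_mul] at hn₁ hn₂ ⊢
    exact Nat.choose_le_choose t (by omega)
  · have hmt : 2 * t ≤ m * t := Nat.mul_le_mul_right t hm
    have hmt' : m * 2 ≤ m * t := Nat.mul_le_mul_left m ht
    have hmtt : m * t * 2 ≤ m * t * t := Nat.mul_le_mul_left _ ht
    have hm₁ : m * (t + 1) = m * t + m := by ring
    rw [hn₁, hn₂]
    calc m * Nat.choose (m * t * t + m * t - 1) t
        ≤ Nat.choose (m * t * t + m * t - 1) (t + 1) :=
          Nat.mul_choose_le_choose_succ (by omega)
      _ ≤ Nat.choose (m * t * t + 2 * (m * t) - 1) (t + 1) := Nat.choose_le_choose _ (by omega)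
      _ ≤ Nat.choose (m * t * t + 2 * (m * t) - 1) (m * t) :=
        Nat.choose_le_choose_of_le_of_le_half (by omega) (by omega)
end

section
/- Let G be an additive abelian group, let q ≥ 2, N ≥ 1, t ≥ 1 be integers, and let g_0,…,g_{q−1} ∈ G be a t-Sidon family. Then for every g ∈ G, the set C_g := {x ∈ S_{q,N} : ∑_{i=0}^{q−1} x_i · g_i = g} satisfies d₁(x,y) ≥ t+1 for all distinct x, y ∈ C_g. -/
/-- A family `g : Fin q → G` in an additive abelian group is a `t`-Sidon family if all
`t`-fold sums (with repetition) of its members are distinct: whenever two multiplicity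
tuples `e, f` of total weight `t` give equal sums `∑ i, e i • g i = ∑ i, f i • g i`,
we have `e = f`. -/
def IsSidonFamily {G : Type*} [AddCommGroup G] {q : ℕ} (t : ℕ) (g : Fin q → G) : Prop :=
  ∀ e f : Fin q → ℕ, ∑ i, e i = t → ∑ i, f i = t →
    ∑ i, e i • g i = ∑ i, f i • g i → e = f

/-!
Write `p = x - y` and `m = y - x` (truncated, coordinatewise). Since `x` and `y` have the same
total and the same weighted sum, `p` and `m` have the same total `d₁(x, y)` and the same
weighted sum, yet `p ≠ m` because their supports are disjoint and `x ≠ y`. A `t`-Sidon family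
is `s`-Sidon for every `s ≤ t`, so `d₁(x, y) ≤ t` is impossible.
-/

open Finset

section TruncatedSub

variable {ι : Type*}

theorem Finset.sum_tsub_comm_of_sum_eq (s : Finset ι) {x y : ι → ℕ}
    (h : ∑ i ∈ s, x i = ∑ i ∈ s, y i) : ∑ i ∈ s, (x i - y i) = ∑ i ∈ s, (y i - x i) := by
  have hmax : ∑ i ∈ s, (x i - y i) + ∑ i ∈ s, y i = ∑ i ∈ s, (y i - x i) + ∑ i ∈ s, x i := by
    simp only [← sum_add_distrib, tsub_add_eq_max, max_comm]
  omega

theorem Finset.sum_tsub_smul_eq_of_sum_smul_eq {G : Type*} [AddCancelCommMonoid G]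
    (s : Finset ι) {x y : ι → ℕ} (g : ι → G) (h : ∑ i ∈ s, x i • g i = ∑ i ∈ s, y i • g i) :
    ∑ i ∈ s, (x i - y i) • g i = ∑ i ∈ s, (y i - x i) • g i := by
  apply add_right_cancel (b := ∑ i ∈ s, x i • g i)
  conv_lhs => rw [h]
  simp only [← sum_add_distrib, ← add_smul, tsub_add_eq_max, max_comm]

theorem eq_of_forall_tsub_eq_tsub {x y : ι → ℕ} (h : ∀ i, x i - y i = y i - x i) : x = y :=
  funext fun i => by have := h i; omega

end TruncatedSub

theorem d1_eq_sum_tsub {q : ℕ} {x y : Fin q → ℕ} (h : ∑ i, x i = ∑ i, y i) :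
    d1 x y = ∑ i, (x i - y i) := by
  have habs : ∀ i, ((x i : ℤ) - y i).natAbs = (x i - y i) + (y i - x i) := fun i => by omega
  rw [d1, sum_congr rfl fun i _ => habs i, sum_add_distrib,
    ← Finset.sum_tsub_comm_of_sum_eq _ h]
  omega

theorem IsSidonFamily.of_le {G : Type*} [AddCommGroup G] {q s t : ℕ} {g : Fin q → G}
    (hg : IsSidonFamily t g) (hst : s ≤ t) : IsSidonFamily s g := by
  intro e f he hf hef
  rcases isEmpty_or_nonempty (Fin q) with hq | hq
  · exact Subsingleton.elim e f
  obtain ⟨i₀⟩ := hq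
  -- pad both multiplicity tuples with `t - s` copies of one common member
  have hpad : ∀ u : Fin q → ℕ, ∑ i, u i = s →
      ∑ i, (u + Pi.single i₀ (t - s) : Fin q → ℕ) i = t := by
    intro u hu
    simp only [Pi.add_apply, sum_add_distrib, sum_pi_single', mem_univ, if_true, hu]
    omega
  have key := hg _ _ (hpad e he) (hpad f hf)
    (by simp only [Pi.add_apply, add_smul, sum_add_distrib, hef])
  exact add_right_cancel key

theorem sidon_gives_l1_distance_general {G : Type*} [AddCommGroup G] (q N t : ℕ)
    (g : Fin q → G) (hSidon : IsSidonFamily t g) (gv : G)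
    (x y : Fin q → ℕ) (hx : ∑ i, x i = N) (hy : ∑ i, y i = N)
    (hxg : ∑ i, x i • g i = gv) (hyg : ∑ i, y i • g i = gv) (hxy : x ≠ y) :
    t + 1 ≤ d1 x y := by
  have hsum : ∑ i, x i = ∑ i, y i := hx.trans hy.symm
  by_contra! hlt
  have hle : ∑ i, (x i - y i) ≤ t := by rw [← d1_eq_sum_tsub hsum]; omega
  have hpm := hSidon.of_le hle (fun i => x i - y i) (fun i => y i - x i) rfl
    (Finset.sum_tsub_comm_of_sum_eq _ hsum).symm
    (Finset.sum_tsub_smul_eq_of_sum_smul_eq _ g (hxg.trans hyg.symm))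
  exact hxy (eq_of_forall_tsub_eq_tsub (congrFun hpm))

/-- if `g_0, …, g_{q−1}` is a `t`-Sidon family in an additive abelian group
`G`, then for every `g ∈ G` the set `C_g = {x ∈ S_{q,N} : ∑ i, x i • g i = g}` has pairwise
ℓ₁ distances at least `t + 1`. -/
theorem sidon_gives_l1_distance {G : Type*} [AddCommGroup G] (q N t : ℕ)
    (hq : 2 ≤ q) (hN : 1 ≤ N) (ht : 1 ≤ t)
    (g : Fin q → G) (hSidon : IsSidonFamily t g) (gv : G)
    (x y : Fin q → ℕ) (hx : ∑ i, x i = N) (hy : ∑ i, y i = N)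
    (hxg : ∑ i, x i • g i = gv) (hyg : ∑ i, y i • g i = gv) (hxy : x ≠ y) :
    t + 1 ≤ d1 x y :=
  sidon_gives_l1_distance_general q N t g hSidon gv x y hx hy hxg hyg hxy
end

section
/- Let m ≥ 0, K ≥ 1, and n ≥ (m+1)(K−1)+1 be integers, and let a_1,…,a_n ∈ ℝ^m. Then there exist a function c : {1,…,n} → {1,…,K} (a partition of the index set into K blocks I_j = c^{−1}(j)) and nonnegative reals x_1,…,x_n, not all zero, such that for all j, j′ ∈ {1,…,K}: ∑_{i ∈ I_j} x_i = ∑_{i ∈ I_{j′}} x_i and ∑_{i ∈ I_j} x_i · a_i = ∑_{i ∈ I_{j′}} x_i · a_i (equality of vectors in ℝ^m). -/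
open Finset

section Aux

variable {E : Type*} [NormedAddCommGroup E] [InnerProductSpace ℝ E]

/-- If the inner product of `p` with `y` is less than `‖p‖²`, one can move from `p`
towards `y` and strictly decrease the norm. -/
lemma tv_decrease {p y : E} (h : inner ℝ p y < ‖p‖ ^ 2) :
    ∃ t : ℝ, 0 ≤ t ∧ t ≤ 1 ∧ ‖(1 - t) • p + t • y‖ < ‖p‖ := by
  set z := y - p with hz
  have hsz : (inner ℝ p z : ℝ) < 0 := by
    rw [hz, inner_sub_right, real_inner_self_eq_norm_sq]; linarith
  have hz0 : z ≠ 0 := by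
    intro h0; rw [h0, inner_zero_right] at hsz; exact lt_irrefl _ hsz
  have hzpos : (0:ℝ) < ‖z‖ := norm_pos_iff.mpr hz0
  have hr : (0:ℝ) < ‖z‖ ^ 2 := by positivity
  set s : ℝ := inner ℝ p z with hsdef
  set r : ℝ := ‖z‖ ^ 2 with hrdef
  refine ⟨min 1 (-s / r),
    le_min zero_le_one (div_nonneg (by linarith) hr.le), min_le_left _ _, ?_⟩
  · set t : ℝ := min 1 (-s / r) with htdef
    have ht0 : 0 < t := lt_min zero_lt_one (div_pos (by linarith) hr)
    have ht1 : t ≤ -s / r := min_le_right _ _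
    have hcombo : (1 - t) • p + t • y = p + t • z := by
      rw [hz]; module
    rw [hcombo]
    have hexp : ‖p + t • z‖ ^ 2 = ‖p‖ ^ 2 + 2 * (t * s) + t ^ 2 * r := by
      rw [norm_add_sq_real, real_inner_smul_right, norm_smul, mul_pow, ← hsdef]
      simp [Real.norm_eq_abs, sq_abs, hrdef]
    have htr : t * r ≤ -s := by
      have := mul_le_mul_of_nonneg_right ht1 hr.le
      rwa [div_mul_cancel₀ _ hr.ne'] at this
    have hsq : ‖p + t • z‖ ^ 2 < ‖p‖ ^ 2 := by nlinarith
    nlinarith [norm_nonneg (p + t • z), norm_nonneg p]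

/-- Variational inequality for a point of minimal norm in a convex set. -/
lemma tv_varineq {C : Set E} (hC : Convex ℝ C) {p : E}
    (hmin : ∀ q ∈ C, ‖p‖ ≤ ‖q‖) {y : E} (hy : y ∈ C) (hp : p ∈ C) :
    ‖p‖ ^ 2 ≤ inner ℝ p y := by
  by_contra hcon
  obtain ⟨t, ht0, ht1, hlt⟩ := tv_decrease (lt_of_not_ge hcon)
  have hmem : (1 - t) • p + t • y ∈ C := hC hp hy (by linarith) ht0 (by ring)
  exact absurd (hmin _ hmem) (not_le.mpr hlt)

end Aux

/-- An affinely independent finset contained in the hyperplane `⟪p, ·⟫ = ‖p‖²` (with `p ≠ 0`)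
in `EuclideanSpace ℝ κ` has at most `card κ` elements. -/
lemma tv_card_le {κ : Type*} [Fintype κ] {t : Finset (EuclideanSpace ℝ κ)}
    (hai : AffineIndependent ℝ ((↑) : t → EuclideanSpace ℝ κ))
    {p : EuclideanSpace ℝ κ} (hp : p ≠ 0)
    (hsub : ∀ y ∈ t, (inner ℝ p y : ℝ) = ‖p‖ ^ 2) : t.card ≤ Fintype.card κ := by
  classical
  set f : EuclideanSpace ℝ κ →ₗ[ℝ] ℝ := innerₗ (EuclideanSpace ℝ κ) p with hf
  have hfp : f p = ‖p‖ ^ 2 := real_inner_self_eq_norm_sq p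
  have hppos : (0:ℝ) < ‖p‖ := norm_pos_iff.mpr hp
  have hp2 : f p ≠ 0 := by
    rw [hfp]; positivity
  have hrange : LinearMap.range f = ⊤ := by
    rw [LinearMap.range_eq_top]
    intro z
    exact ⟨(z / f p) • p, by rw [map_smul, smul_eq_mul, div_mul_cancel₀ _ hp2]⟩
  have hrk : Module.finrank ℝ (LinearMap.range f) + Module.finrank ℝ (LinearMap.ker f)
      = Fintype.card κ := by
    rw [LinearMap.finrank_range_add_finrank_ker]
    simp [finrank_euclideanSpace]
  rw [hrange, finrank_top, Module.finrank_self] at hrk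
  -- vectorSpan of points of t is inside ker f
  have hspan : vectorSpan ℝ (t : Set (EuclideanSpace ℝ κ)) ≤ LinearMap.ker f := by
    rw [vectorSpan_def, Submodule.span_le]
    rintro v ⟨y₁, hy₁, y₂, hy₂, rfl⟩
    simp only [SetLike.mem_coe, LinearMap.mem_ker, vsub_eq_sub, map_sub]
    rw [show f y₁ = ‖p‖^2 from hsub y₁ hy₁, show f y₂ = ‖p‖^2 from hsub y₂ hy₂, sub_self]
  have hcard := hai.card_le_finrank_succ
  rw [Fintype.card_coe] at hcard
  have hmono : Module.finrank ℝ (vectorSpan ℝ (Set.range ((↑) : t → EuclideanSpace ℝ κ)))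
      ≤ Module.finrank ℝ (LinearMap.ker f) := by
    apply Submodule.finrank_mono
    rw [Subtype.range_coe_subtype]
    simpa using hspan
  omega

/-- **Colorful Carathéodory** (many color classes version): given `N ≥ card κ + 1` finite
families of points in `EuclideanSpace ℝ κ`, each containing `0` in the convex hull of its
range, one can pick one point from each family so that `0` is in the convex hull of the
chosen points (expressed via explicit convex weights). -/
lemma colorful_caratheodory {κ ι : Type*} [Fintype κ] [Fintype ι] [Nonempty ι]
    {N : ℕ} (hN : Fintype.card κ + 1 ≤ N)
    (v : Fin N → ι → EuclideanSpace ℝ κ)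
    (hv : ∀ i, (0 : EuclideanSpace ℝ κ) ∈ convexHull ℝ (Set.range (v i))) :
    ∃ (c : Fin N → ι) (l : Fin N → ℝ), (∀ i, 0 ≤ l i) ∧ (∑ i, l i) = 1 ∧
      (∑ i, l i • v i (c i)) = 0 := by
  classical
  have hN0 : 0 < N := by omega
  set C : (Fin N → ι) → Set (EuclideanSpace ℝ κ) :=
    fun c => convexHull ℝ (Set.range fun i => v i (c i)) with hCdef
  have hCconv : ∀ c, Convex ℝ (C c) := fun c => convex_convexHull ℝ _
  have hCne : ∀ c, (C c).Nonempty :=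
    fun c => ⟨v ⟨0, hN0⟩ (c ⟨0, hN0⟩), subset_convexHull ℝ _ (Set.mem_range_self _)⟩
  have hCcpt : ∀ c, IsCompact (C c) := fun c => (Set.finite_range _).isCompact_convexHull ℝ
  -- choose a minimal-norm point in each C c
  have hP : ∀ c : Fin N → ι, ∃ p, p ∈ C c ∧ ∀ q ∈ C c, ‖p‖ ≤ ‖q‖ := by
    intro c
    obtain ⟨p, hpmem, hpmin⟩ := (hCcpt c).exists_isMinOn (hCne c) continuous_norm.continuousOn
    exact ⟨p, hpmem, fun q hq => hpmin hq⟩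
  choose P hPmem hPmin using hP
  -- choose a minimizing transversal
  obtain ⟨cs, -, hcs⟩ := Finset.exists_min_image (Finset.univ : Finset (Fin N → ι))
    (fun c => ‖P c‖) ⟨fun _ => Classical.arbitrary ι, Finset.mem_univ _⟩
  set p := P cs with hpdef
  set x : Fin N → EuclideanSpace ℝ κ := fun i => v i (cs i) with hxdef
  -- extract convex weights for p
  have hpc : p ∈ convexHull ℝ (Set.range x) := hPmem cs
  rw [convexHull_range_eq_exists_affineCombination] at hpc
  obtain ⟨sup, w, hw0, hw1, hwp⟩ := hpc
  rw [affineCombination_eq_linear_combination _ _ _ hw1] at hwp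
  set l : Fin N → ℝ := fun i => if i ∈ sup then w i else 0 with hldef
  have hl0 : ∀ i, 0 ≤ l i := by
    intro i; rw [hldef]; dsimp only
    split
    · exact hw0 _ ‹_›
    · exact le_refl 0
  have hl1 : ∑ i, l i = 1 := by
    show (∑ i, if i ∈ sup then w i else 0) = 1
    rw [Finset.sum_ite_mem, Finset.univ_inter, hw1]
  have hlp : ∑ i, l i • x i = p := by
    show (∑ i, (if i ∈ sup then w i else 0) • x i) = p
    calc (∑ i, (if i ∈ sup then w i else 0) • x i)
        = ∑ i, (if i ∈ sup then w i • x i else 0) := by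
          refine Finset.sum_congr rfl fun i _ => ?_
          split <;> simp
      _ = ∑ i ∈ sup, w i • x i := by rw [Finset.sum_ite_mem, Finset.univ_inter]
      _ = p := hwp
  refine ⟨cs, l, hl0, hl1, ?_⟩
  rw [show (∑ i, l i • v i (cs i)) = p from hlp]
  -- it remains to show p = 0
  by_contra hp0
  -- variational inequality at each point of C cs
  have hvar : ∀ y ∈ C cs, ‖p‖ ^ 2 ≤ inner ℝ p y :=
    fun y hy => tv_varineq (hCconv cs) (hPmin cs) hy (hPmem cs)
  have hvarx : ∀ i, ‖p‖ ^ 2 ≤ inner ℝ p (x i) :=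
    fun i => hvar _ (subset_convexHull ℝ _ (Set.mem_range_self i))
  -- points with positive weight lie on the hyperplane
  have hsum_inner : ∑ i, l i * (inner ℝ p (x i) - ‖p‖ ^ 2) = 0 := by
    have h1 : ∑ i, l i * (inner ℝ p (x i) : ℝ) = ‖p‖ ^ 2 := by
      have : (inner ℝ p (∑ i, l i • x i) : ℝ) = ∑ i, l i * inner ℝ p (x i) := by
        rw [inner_sum]
        exact Finset.sum_congr rfl fun i _ => real_inner_smul_right _ _ _
      rw [← this, hlp, real_inner_self_eq_norm_sq]
    have h2 : ∑ i, l i * (‖p‖:ℝ) ^ 2 = ‖p‖ ^ 2 := by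
      rw [← Finset.sum_mul, hl1, one_mul]
    simp only [mul_sub]
    rw [Finset.sum_sub_distrib, h1, h2, sub_self]
  have hJ : ∀ i, l i ≠ 0 → (inner ℝ p (x i) : ℝ) = ‖p‖ ^ 2 := by
    intro i hi
    have hterm := (Finset.sum_eq_zero_iff_of_nonneg (fun i _ =>
      mul_nonneg (hl0 i) (sub_nonneg.mpr (hvarx i)))).mp hsum_inner i (Finset.mem_univ i)
    rcases mul_eq_zero.mp hterm with h | h
    · exact absurd h hi
    · linarith [sub_eq_zero.mp h]
  -- p is in the convex hull of points with nonzero weight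
  set sup' : Finset (Fin N) := Finset.univ.filter (fun i => l i ≠ 0) with hsup'
  have hLpos : (0:ℝ) < ∑ i ∈ sup', l i := by
    rw [hsup', Finset.sum_filter_ne_zero, hl1]; norm_num
  have hpmem' : p ∈ convexHull ℝ (x '' ↑sup') := by
    have := Finset.centerMass_mem_convexHull sup' (fun i _ => hl0 i) hLpos
      (fun i hi => Set.mem_image_of_mem x (Finset.mem_coe.mpr hi))
    have hcm : sup'.centerMass l x = p := by
      rw [Finset.centerMass, hsup', Finset.sum_filter_ne_zero, hl1, inv_one, one_smul, ← hlp]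
      exact Finset.sum_filter_of_ne (fun i _ hne h => hne (by rw [h, zero_smul]))
    rwa [hcm] at this
  -- Carathéodory: p is in the hull of an affinely independent subset
  rw [convexHull_eq_union] at hpmem'
  simp only [Set.mem_iUnion, exists_prop] at hpmem'
  obtain ⟨t, htsub, htai, hpt⟩ := hpmem'
  -- the subset lies on the hyperplane, so it has at most card κ elements
  have htcard : t.card ≤ Fintype.card κ := by
    apply tv_card_le htai hp0
    intro y hy
    obtain ⟨i, hi, rfl⟩ := htsub hy
    exact hJ i (by simpa [hsup'] using hi)
  -- choose preimage indices; some index i₀ is unused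
  have hpre : ∀ y ∈ t, ∃ i : Fin N, x i = y := by
    intro y hy
    obtain ⟨i, _, rfl⟩ := htsub hy
    exact ⟨i, rfl⟩
  choose g hg using hpre
  set img : Finset (Fin N) := t.attach.image (fun y => g y.1 y.2) with himg
  have himgcard : img.card < N := by
    calc img.card ≤ t.attach.card := Finset.card_image_le
    _ = t.card := Finset.card_attach
    _ ≤ Fintype.card κ := htcard
    _ < N := by omega
  have : ∃ i₀ : Fin N, i₀ ∉ img := by
    by_contra hcon
    push_neg at hcon
    have : (Finset.univ : Finset (Fin N)) ⊆ img := fun i _ => hcon i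
    have := Finset.card_le_card this
    simp [Fintype.card_fin] at this
    omega
  obtain ⟨i₀, hi₀⟩ := this
  -- pick a replacement point in family i₀ with small inner product with p
  have hj₀ : ∃ j₀ : ι, (inner ℝ p (v i₀ j₀) : ℝ) < ‖p‖ ^ 2 := by
    by_contra hcon
    push_neg at hcon
    have hhalf : Convex ℝ {y : EuclideanSpace ℝ κ | ‖p‖ ^ 2 ≤ inner ℝ p y} := by
      apply convex_halfSpace_ge
      exact ⟨fun a b => inner_add_right _ _ _, fun c a => real_inner_smul_right _ _ _⟩
    have hsub2 : Set.range (v i₀) ⊆ {y : EuclideanSpace ℝ κ | ‖p‖ ^ 2 ≤ inner ℝ p y} := by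
      rintro y ⟨j, rfl⟩; exact hcon j
    have := convexHull_min hsub2 hhalf (hv i₀)
    simp only [Set.mem_setOf_eq, inner_zero_right] at this
    have hppos : (0:ℝ) < ‖p‖ := norm_pos_iff.mpr hp0
    nlinarith
  obtain ⟨j₀, hj₀⟩ := hj₀
  set cs' : Fin N → ι := Function.update cs i₀ j₀ with hcs'
  -- t is contained in the range of the new transversal
  have htsub' : (t : Set (EuclideanSpace ℝ κ)) ⊆ Set.range fun i => v i (cs' i) := by
    intro y hy
    refine ⟨g y hy, ?_⟩
    have hne : g y hy ≠ i₀ := by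
      intro h
      apply hi₀
      rw [himg, ← h]
      exact Finset.mem_image.mpr ⟨⟨y, hy⟩, Finset.mem_attach _ _, rfl⟩
    show v (g y hy) (cs' (g y hy)) = y
    rw [hcs', Function.update_of_ne hne]
    exact hg y hy
  have hpC' : p ∈ C cs' :=
    (convexHull_min (htsub'.trans (subset_convexHull ℝ _)) (hCconv cs')) hpt
  have hy₀C' : v i₀ j₀ ∈ C cs' := by
    apply subset_convexHull ℝ _
    refine ⟨i₀, ?_⟩
    show v i₀ (cs' i₀) = v i₀ j₀
    rw [hcs', Function.update_self]
  -- move from p towards v i₀ j₀ to decrease the norm: contradiction with minimality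
  obtain ⟨τ, hτ0, hτ1, hτlt⟩ := tv_decrease hj₀
  have hqC' : (1 - τ) • p + τ • v i₀ j₀ ∈ C cs' :=
    (hCconv cs') hpC' hy₀C' (by linarith) hτ0 (by ring)
  have := hPmin cs' _ hqC'
  have hmincs := hcs cs' (Finset.mem_univ _)
  have : ‖P cs‖ ≤ ‖(1 - τ) • p + τ • v i₀ j₀‖ := le_trans hmincs this
  rw [← hpdef] at this
  linarith

/-- a rephrasing of Tverberg's theorem: given `n ≥ (m+1)(K−1)+1` points
`a_1, …, a_n ∈ ℝ^m` with `K ≥ 1`, there exist a partition of the index set into `K` blocks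
(encoded by `c : Fin n → Fin K`) and nonnegative reals `x_1, …, x_n`, not all zero, such
that all blocks have equal weight `∑_{i ∈ I_j} x_i` and equal weighted sums
`∑_{i ∈ I_j} x_i • a_i ∈ ℝ^m`. -/
theorem tverberg_partition (m K n : ℕ) (hK : 1 ≤ K)
    (hn : (m + 1) * (K - 1) + 1 ≤ n) (a : Fin n → (Fin m → ℝ)) :
    ∃ (c : Fin n → Fin K) (x : Fin n → ℝ),
      (∀ i, 0 ≤ x i) ∧ (∃ i, x i ≠ 0) ∧
      ∀ j j' : Fin K,
        (∑ i ∈ Finset.univ.filter (fun i => c i = j), x i) =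
          (∑ i ∈ Finset.univ.filter (fun i => c i = j'), x i) ∧
        (∑ i ∈ Finset.univ.filter (fun i => c i = j), x i • a i) =
          (∑ i ∈ Finset.univ.filter (fun i => c i = j'), x i • a i) := by
  classical
  set κ := Fin (K - 1) × Fin (m + 1) with hκ
  have hκcard : Fintype.card κ = (m + 1) * (K - 1) := by
    simp [hκ, Fintype.card_prod, Fintype.card_fin, Nat.mul_comm]
  -- the Sarkaria vectors
  have hK1K : K - 1 < K := by omega
  set lastK : Fin K := ⟨K - 1, hK1K⟩ with hlastK
  set castK : Fin (K - 1) → Fin K := fun s => ⟨s.1, by omega⟩ with hcastK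
  set u : Fin K → Fin (K - 1) → ℝ :=
    fun j s => (if j = castK s then 1 else 0) - (if j = lastK then 1 else 0) with hu
  have husum : ∀ s : Fin (K - 1), ∑ j, u j s = 0 := by
    intro s
    rw [hu]
    simp only [Finset.sum_sub_distrib, Finset.sum_ite_eq' Finset.univ,
      Finset.mem_univ, if_true, sub_self]
  -- augmented points
  set ha : Fin n → Fin (m + 1) → ℝ := fun i => Fin.snoc (a i) 1 with hha
  -- plain-function versions of the tensor points
  set gp : Fin n → Fin K → (κ → ℝ) := fun i j st => u j st.1 * ha i st.2 with hgp
  set L := WithLp.linearEquiv 2 ℝ (κ → ℝ) with hL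
  set v : Fin n → Fin K → EuclideanSpace ℝ κ := fun i j => L.symm (gp i j) with hv
  have hNn : Fintype.card κ + 1 ≤ n := by rw [hκcard]; exact hn
  have hvzero : ∀ i, (0 : EuclideanSpace ℝ κ) ∈ convexHull ℝ (Set.range (v i)) := by
    intro i
    apply mem_convexHull_of_exists_fintype (fun _ : Fin K => (K:ℝ)⁻¹) (v i)
    · intro j; positivity
    · rw [Finset.sum_const, Finset.card_univ, Fintype.card_fin, nsmul_eq_mul,
        mul_inv_cancel₀ (by positivity : (K:ℝ) ≠ 0)]
    · intro j; exact Set.mem_range_self j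
    · rw [hv]
      simp only [← map_smul, ← map_sum]
      rw [show (0 : EuclideanSpace ℝ κ) = L.symm 0 from (map_zero L.symm).symm]
      congr 1
      funext st
      simp only [Finset.sum_apply, Pi.smul_apply, hgp, smul_eq_mul, Pi.zero_apply]
      have : ∑ j : Fin K, (K:ℝ)⁻¹ * (u j st.1 * ha i st.2)
          = ((K:ℝ)⁻¹ * ha i st.2) * ∑ j, u j st.1 := by
        rw [Finset.mul_sum]; exact Finset.sum_congr rfl fun j _ => by ring
      rw [this, husum st.1, mul_zero]
  haveI : Nonempty (Fin K) := ⟨⟨0, by omega⟩⟩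
  obtain ⟨c, l, hl0, hl1, hlsum⟩ := colorful_caratheodory hNn v hvzero
  -- translate the vanishing sum to the plain function world
  have hplain : ∑ i, l i • gp i (c i) = 0 := by
    have := congrArg L hlsum
    rw [map_sum, map_zero] at this
    simpa only [map_smul, hv, LinearEquiv.apply_symm_apply] using this
  -- block sums of the augmented points
  set W : Fin K → Fin (m + 1) → ℝ :=
    fun j => ∑ i ∈ Finset.univ.filter (fun i => c i = j), l i • ha i with hW
  have hWkey : ∀ j : Fin K, W j = W lastK := by
    have hcoord : ∀ (s : Fin (K - 1)) (t : Fin (m + 1)),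
        W (castK s) t - W lastK t = 0 := by
      intro s t
      have h0 := congrFun hplain (s, t)
      simp only [Finset.sum_apply, Pi.smul_apply, Pi.zero_apply, smul_eq_mul, hgp] at h0
      -- group by color
      have hgroup : ∑ j : Fin K, ∑ i ∈ Finset.univ.filter (fun i => c i = j),
          l i * (u (c i) s * ha i t) = ∑ i, l i * (u (c i) s * ha i t) :=
        Finset.sum_fiberwise _ _ _
      have hfiber : ∀ j : Fin K, ∑ i ∈ Finset.univ.filter (fun i => c i = j),
          l i * (u (c i) s * ha i t) = u j s * W j t := by
        intro j
        rw [hW]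
        simp only [Finset.sum_apply, Pi.smul_apply, smul_eq_mul, Finset.mul_sum]
        apply Finset.sum_congr rfl
        intro i hi
        rw [(Finset.mem_filter.mp hi).2]
        ring
      have hsum0 : ∑ j : Fin K, u j s * W j t = 0 := by
        rw [← Finset.sum_congr rfl (fun j _ => hfiber j), hgroup, h0]
      -- evaluate the sum explicitly
      rw [hu] at hsum0
      simp only [sub_mul, ite_mul, one_mul, zero_mul, Finset.sum_sub_distrib,
        Finset.sum_ite_eq' Finset.univ, Finset.mem_univ, if_true] at hsum0
      exact hsum0
    intro j
    by_cases hj : j = lastK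
    · rw [hj]
    · have hjlt : (j : ℕ) < K - 1 := by
        have := j.2
        rcases Nat.lt_or_ge (j : ℕ) (K - 1) with h | h
        · exact h
        · exfalso; apply hj; apply Fin.ext; simp [hlastK]; omega
      funext t
      have := hcoord ⟨j.1, hjlt⟩ t
      have hcj : castK ⟨j.1, hjlt⟩ = j := by apply Fin.ext; simp [hcastK]
      rw [hcj] at this
      linarith
  refine ⟨c, l, hl0, ?_, ?_⟩
  · by_contra hcon
    push_neg at hcon
    rw [Finset.sum_congr rfl (fun i _ => hcon i), Finset.sum_const, smul_zero] at hl1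
    exact one_ne_zero hl1.symm
  intro j j'
  have hWj : W j = W j' := by rw [hWkey j, hWkey j']
  constructor
  · have h1 := congrFun hWj (Fin.last m)
    simpa only [hW, Finset.sum_apply, Pi.smul_apply, smul_eq_mul, hha,
      Fin.snoc_last, mul_one] using h1
  · funext t'
    have h1 := congrFun hWj (Fin.castSucc t')
    simp only [hW, Finset.sum_apply, Pi.smul_apply, smul_eq_mul, hha,
      Fin.snoc_castSucc] at h1
    simpa only [Finset.sum_apply, Pi.smul_apply, smul_eq_mul] using h1
end
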